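/- arXiv:2308.14443 — 9 statements merged into one kernel-verified Lean document; each statement's English description precedes it below -/
import Mathlib

section
/- If H is a convex subgraph of a graph G and X is a mutual-visibility set of G, then X ∩ V(H) is a mutual-visibility set of H. -/
open SimpleGraph

/-- Two vertices are `X`-visible in `G`: some shortest path between them has
no internal vertex in `X`. -/
def IsVisiblePair {V : Type*} (G : SimpleGraph V) (X : Set V) (x y : V) : Prop :=
  ∃ p : G.Walk x y, p.IsPath ∧ p.length = G.dist x y ∧
    ∀ z ∈ p.support, z ∈ X → z = x ∨ z = y

/-- `X` is a mutual-visibility set of `G`. -/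
def MutualVisSet {V : Type*} (G : SimpleGraph V) (X : Set V) : Prop :=
  ∀ x ∈ X, ∀ y ∈ X, IsVisiblePair G X x y

/-- `X` is a total mutual-visibility set of `G`. -/
def TotalMutualVisSet {V : Type*} (G : SimpleGraph V) (X : Set V) : Prop :=
  ∀ x y : V, IsVisiblePair G X x y

/-- The mutual-visibility number `μ(G)`. -/
noncomputable def mutualVisNum {V : Type*} (G : SimpleGraph V) : ℕ :=
  sSup {n | ∃ X : Set V, MutualVisSet G X ∧ X.ncard = n}

/-- The total mutual-visibility number `μₜ(G)`. -/
noncomputable def totalMutualVisNum {V : Type*} (G : SimpleGraph V) : ℕ :=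
  sSup {n | ∃ X : Set V, TotalMutualVisSet G X ∧ X.ncard = n}

/-- A set of vertices is convex: every shortest path in `G` between two of its
vertices has all its vertices in the set. -/
def ConvexSet {V : Type*} (G : SimpleGraph V) (S : Set V) : Prop :=
  ∀ x ∈ S, ∀ y ∈ S, ∀ p : G.Walk x y, p.IsPath → p.length = G.dist x y →
    ∀ z ∈ p.support, z ∈ S

/-!
By convexity, a shortest `x,y`-path of `G` witnessing `X`-visibility lies in `H`. Since `H`
embeds into `G`, distances in `H` are at least those in `G`, so the same path is a shortest
path of `H`, and it still has no internal vertex in `X`.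
-/

namespace SimpleGraph

variable {V W : Type*} {G : SimpleGraph V} {u v : V}

theorem Reachable.dist_map_le {G' : SimpleGraph W} (f : G →g G') (h : G.Reachable u v) :
    G'.dist (f u) (f v) ≤ G.dist u v := by
  obtain ⟨r, hr⟩ := h.exists_walk_length_eq_dist
  rw [← hr, ← Walk.length_map f]
  exact dist_le _

namespace Walk

variable {s : Set V} {p : G.Walk u v} (hw : ∀ x ∈ p.support, x ∈ s)

theorem length_induce : (p.induce s hw).length = p.length := by
  conv_rhs => rw [← p.map_induce hw]
  exact (length_map _ _).symm

theorem IsPath.induce (hp : p.IsPath) : (p.induce s hw).IsPath :=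
  IsPath.of_map (f := (Embedding.induce s).toHom) (by rwa [map_induce])

theorem length_induce_eq_dist (hp : p.length = G.dist u v) :
    (p.induce s hw).length =
      (G.induce s).dist ⟨u, hw _ p.start_mem_support⟩ ⟨v, hw _ p.end_mem_support⟩ := by
  refine le_antisymm ?_ (dist_le _)
  calc (p.induce s hw).length = G.dist u v := by rw [length_induce, hp]
    _ ≤ _ := (p.induce s hw).reachable.dist_map_le (Embedding.induce s).toHom

end Walk

end SimpleGraph

theorem convex_inter_mutualVisSet_general {V : Type*} (G : SimpleGraph V)
    (S : Set V) (hS : ConvexSet G S) (X : Set V) (hX : MutualVisSet G X) :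
    MutualVisSet (SimpleGraph.induce S G) (Subtype.val ⁻¹' X) := by
  intro a ha b hb
  obtain ⟨p, hp, hlen, hvis⟩ := hX a ha b hb
  have hpS : ∀ z ∈ p.support, z ∈ S := hS a a.2 b b.2 p hp hlen
  refine ⟨p.induce S hpS, hp.induce hpS, Walk.length_induce_eq_dist hpS hlen, ?_⟩
  intro z hz hzX
  rw [Walk.support_induce, List.mem_attachWith] at hz
  exact (hvis z hz hzX).imp Subtype.ext Subtype.ext

/-- If `H` (given by its vertex set `S`) is a convex subgraph of `G` and `X` is
a mutual-visibility set of `G`, then `X ∩ V(H)` is a mutual-visibility set of `H`. -/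
theorem convex_inter_mutualVisSet {V : Type*} (G : SimpleGraph V) (hG : G.Connected)
    (S : Set V) (hS : ConvexSet G S) (X : Set V) (hX : MutualVisSet G X) :
    MutualVisSet (SimpleGraph.induce S G) (Subtype.val ⁻¹' X) :=
  convex_inter_mutualVisSet_general G S hS X hX
end

section
/- For every d ≥ 2, the mutual-visibility number of the hypercube satisfies μ(Q_d) ≤ 2·μ(Q_{d-1}). -/
/-!
Splitting on the last coordinate covers `Q_d` by two copies of `Q_{d-1}`, each convex. A
shortest path between two vertices of a convex copy stays inside it, so a mutual-visibility
set of `Q_d` meets each copy in a mutual-visibility set of `Q_{d-1}`, of size at most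
`μ(Q_{d-1})`.
-/

open SimpleGraph

/-- The hypercube `Q_d`: vertices are `{0,1}^d`, adjacency is Hamming distance 1. -/
def Qube (d : ℕ) : SimpleGraph (Fin d → Bool) :=
  SimpleGraph.fromRel (fun x y => hammingDist x y = 1)

namespace SimpleGraph

variable {V W : Type*} {G : SimpleGraph V} {H : SimpleGraph W}

lemma Reachable.dist_map_le_s2 (f : H →g G) {x y : W} (h : H.Reachable x y) :
    G.dist (f x) (f y) ≤ H.dist x y := by
  obtain ⟨r, hr⟩ := h.exists_walk_length_eq_dist
  rw [← hr, ← Walk.length_map f]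
  exact dist_le _

lemma Walk.dist_add_dist_le_length [DecidableEq V] {u v z : V} (p : G.Walk u v)
    (hz : z ∈ p.support) : G.dist u z + G.dist z v ≤ p.length := by
  have hsplit := congrArg Walk.length (p.take_spec hz)
  rw [Walk.length_append] at hsplit
  have := dist_le (p.takeUntil z hz)
  have := dist_le (p.dropUntil z hz)
  omega

lemma Walk.exists_lift_of_support_subset_range (f : H ↪g G) {u v : V} (p : G.Walk u v)
    (hp : ∀ z ∈ p.support, z ∈ Set.range f) {x y : W} (hx : f x = u) (hy : f y = v) :
    ∃ q : H.Walk x y, q.length = p.length ∧ ∀ z ∈ q.support, f z ∈ p.support := by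
  induction p generalizing x with
  | nil =>
    obtain rfl := f.injective (hx.trans hy.symm)
    exact ⟨.nil, rfl, by simp_all⟩
  | cons hadj p ih =>
    obtain ⟨x', rfl⟩ := hp _ (p.start_mem_support.tail _)
    obtain ⟨q, hlen, hsupp⟩ := ih (fun z hz => hp z (.tail _ hz)) rfl hy
    subst hx
    refine ⟨.cons (f.map_adj_iff.mp hadj) q, by simp [hlen], ?_⟩
    simp only [Walk.support_cons, List.mem_cons, forall_eq_or_imp, true_or, true_and]
    exact fun z hz => .inr (hsupp z hz)

end SimpleGraph

section MutualVisibility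

variable {V W : Type*} {G : SimpleGraph V} {H : SimpleGraph W}

lemma MutualVisSet.preimage {X : Set V} (hX : MutualVisSet G X) (f : H ↪g G)
    (hf : ConvexSet G (Set.range f)) : MutualVisSet H (f ⁻¹' X) := by
  intro x hx y hy
  obtain ⟨p, hpath, hlen, hvis⟩ := hX _ hx _ hy
  obtain ⟨q, hqlen, hqsupp⟩ := p.exists_lift_of_support_subset_range f
    (hf _ ⟨x, rfl⟩ _ ⟨y, rfl⟩ p hpath hlen) rfl rfl
  have hqdist : q.length = H.dist x y :=
    le_antisymm (by rw [hqlen, hlen]; exact q.reachable.dist_map_le_s2 f.toHom) (dist_le q)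
  refine ⟨q, q.isPath_of_length_eq_dist hqdist, hqdist, fun z hz hzX => ?_⟩
  simpa only [f.injective.eq_iff] using hvis _ (hqsupp z hz) hzX

lemma ncard_le_mutualVisNum [Finite V] {X : Set V} (hX : MutualVisSet G X) :
    X.ncard ≤ mutualVisNum G := by
  refine le_csSup ⟨Nat.card V, ?_⟩ ⟨X, hX, rfl⟩
  rintro _ ⟨Y, -, rfl⟩
  exact Set.ncard_le_card Y

lemma mutualVisNum_le {m : ℕ} (h : ∀ X, MutualVisSet G X → X.ncard ≤ m) :
    mutualVisNum G ≤ m := by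
  refine csSup_le ⟨0, ∅, fun x hx => hx.elim, Set.ncard_empty V⟩ ?_
  rintro _ ⟨X, hX, rfl⟩
  exact h X hX

lemma mutualVisNum_le_two_mul_of_convex_cover [Finite V] (f g : H ↪g G)
    (hf : ConvexSet G (Set.range f)) (hg : ConvexSet G (Set.range g))
    (hcover : Set.range f ∪ Set.range g = Set.univ) :
    mutualVisNum G ≤ 2 * mutualVisNum H := by
  have : Finite W := Finite.of_injective f f.injective
  refine mutualVisNum_le fun X hX => ?_
  have hsplit : X = f '' (f ⁻¹' X) ∪ g '' (g ⁻¹' X) := by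
    rw [Set.image_preimage_eq_inter_range, Set.image_preimage_eq_inter_range,
      ← Set.inter_union_distrib_left, hcover, Set.inter_univ]
  calc X.ncard ≤ (f '' (f ⁻¹' X)).ncard + (g '' (g ⁻¹' X)).ncard := by
        conv_lhs => rw [hsplit]
        exact Set.ncard_union_le _ _
    _ = (f ⁻¹' X).ncard + (g ⁻¹' X).ncard := by
        rw [Set.ncard_image_of_injective _ f.injective, Set.ncard_image_of_injective _ g.injective]
    _ ≤ mutualVisNum H + mutualVisNum H :=
        add_le_add (ncard_le_mutualVisNum (hX.preimage f hf))
          (ncard_le_mutualVisNum (hX.preimage g hg))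
    _ = 2 * mutualVisNum H := (two_mul _).symm

end MutualVisibility

lemma hammingDist_snoc {β : Type*} [DecidableEq β] {n : ℕ} (a b : Fin n → β) (s t : β) :
    hammingDist (Fin.snoc a s : Fin (n + 1) → β) (Fin.snoc b t) =
      hammingDist a b + if s = t then 0 else 1 := by
  simp only [hammingDist, Finset.card_filter, Fin.sum_univ_castSucc, Fin.snoc_castSucc,
    Fin.snoc_last, ite_not]

namespace Qube

variable {n : ℕ}

lemma adj_iff {d : ℕ} {x y : Fin d → Bool} : (Qube d).Adj x y ↔ hammingDist x y = 1 := by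
  refine ⟨fun ⟨_, h⟩ => h.elim id fun h => (hammingDist_comm x y).trans h, fun h => ⟨?_, .inl h⟩⟩
  rintro rfl
  simp at h

lemma hammingDist_le_length {d : ℕ} {x y : Fin d → Bool} (p : (Qube d).Walk x y) :
    hammingDist x y ≤ p.length := by
  induction p with
  | nil => simp
  | @cons u v w hadj p ih =>
    have := hammingDist_triangle u v w
    rw [adj_iff.mp hadj] at this
    rw [Walk.length_cons]
    omega

def snocEmb (c : Bool) : Qube n ↪g Qube (n + 1) where
  toFun a := Fin.snoc a c
  inj' a b h := by simpa using congrArg Fin.init h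
  map_rel_iff' {a b} := by
    rw [adj_iff, adj_iff]
    show hammingDist (Fin.snoc a c : Fin (n + 1) → Bool) (Fin.snoc b c) = 1 ↔ _
    simp [hammingDist_snoc]

@[simp]
lemma snocEmb_apply (c : Bool) (a : Fin n → Bool) : snocEmb c a = Fin.snoc a c := rfl

lemma mem_range_snocEmb {c : Bool} {z : Fin (n + 1) → Bool} :
    z ∈ Set.range (snocEmb c) ↔ z (Fin.last n) = c := by
  refine ⟨?_, fun h => ⟨Fin.init z, ?_⟩⟩
  · rintro ⟨a, rfl⟩
    simp
  · simp [← h]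

lemma exists_walk_length_eq_hammingDist : ∀ {d : ℕ} (x y : Fin d → Bool),
    ∃ p : (Qube d).Walk x y, p.length = hammingDist x y
  | 0, x, y => Subsingleton.elim x y ▸ ⟨.nil, by simp⟩
  | m + 1, x, y => by
    obtain ⟨a, s, rfl⟩ : ∃ a s, x = Fin.snoc a s := ⟨_, _, (Fin.snoc_init_self x).symm⟩
    obtain ⟨b, t, rfl⟩ : ∃ b t, y = Fin.snoc b t := ⟨_, _, (Fin.snoc_init_self y).symm⟩
    obtain ⟨p, hp⟩ := exists_walk_length_eq_hammingDist a b
    let q : (Qube (m + 1)).Walk (Fin.snoc a s) (Fin.snoc b s) := p.map (snocEmb s).toHom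
    have hq : q.length = hammingDist a b := (Walk.length_map _ p).trans hp
    rw [hammingDist_snoc]
    by_cases hst : s = t
    · subst hst
      exact ⟨q, by simp [hq]⟩
    · have hadj : (Qube (m + 1)).Adj (Fin.snoc b s) (Fin.snoc b t) :=
        adj_iff.mpr (by simp [hammingDist_snoc, hst])
      exact ⟨q.concat hadj, by simp [hq, hst]⟩

lemma dist_eq_hammingDist {d : ℕ} (x y : Fin d → Bool) : (Qube d).dist x y = hammingDist x y := by
  obtain ⟨p, hp⟩ := exists_walk_length_eq_hammingDist x y
  obtain ⟨q, hq⟩ := p.reachable.exists_walk_length_eq_dist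
  exact le_antisymm (hp ▸ dist_le p) (hq ▸ hammingDist_le_length q)

lemma convexSet_range_snocEmb (c : Bool) : ConvexSet (Qube (n + 1)) (Set.range (snocEmb c)) := by
  rintro _ ⟨a, rfl⟩ _ ⟨b, rfl⟩ p - hp z hz
  rw [mem_range_snocEmb]
  by_contra hzc
  have hdetour := p.dist_add_dist_le_length hz
  rw [hp, ← Fin.snoc_init_self z] at hdetour
  simp only [dist_eq_hammingDist, snocEmb_apply, hammingDist_snoc, hzc, Ne.symm hzc,
    ↓reduceIte] at hdetour
  have := hammingDist_triangle a (Fin.init z) b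
  omega

lemma range_snocEmb_false_union_true :
    Set.range (snocEmb (n := n) false) ∪ Set.range (snocEmb true) = Set.univ := by
  ext z
  simp only [Set.mem_union, mem_range_snocEmb, Set.mem_univ, iff_true]
  exact Bool.eq_false_or_eq_true _ |>.symm

end Qube

theorem mu_Qube_le_two_mul_general (d : ℕ) :
    mutualVisNum (Qube d) ≤ 2 * mutualVisNum (Qube (d - 1)) := by
  cases d with
  | zero => exact Nat.le_mul_of_pos_left _ two_pos
  | succ n =>
    exact mutualVisNum_le_two_mul_of_convex_cover (Qube.snocEmb false) (Qube.snocEmb true)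
      (Qube.convexSet_range_snocEmb false) (Qube.convexSet_range_snocEmb true)
      Qube.range_snocEmb_false_union_true

/-- `μ(Q_d) ≤ 2 μ(Q_{d-1})` for every `d ≥ 2`. -/
theorem mu_Qube_le_two_mul (d : ℕ) (hd : 2 ≤ d) :
    mutualVisNum (Qube d) ≤ 2 * mutualVisNum (Qube (d - 1)) :=
  mu_Qube_le_two_mul_general d
end

section
/- The mutual-visibility number of the 3-dimensional hypercube Q_3 equals 5. -/
open SimpleGraph

instance {d : ℕ} : DecidableRel (Qube d).Adj := fun a b =>
  decidable_of_iff _ (SimpleGraph.fromRel_adj _ a b).symm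

lemma adj_hamming {d : ℕ} {a b : Fin d → Bool} (h : (Qube d).Adj a b) :
    hammingDist a b = 1 := by
  rw [Qube, SimpleGraph.fromRel_adj] at h
  rcases h.2 with h' | h'
  · exact h'
  · rwa [hammingDist_comm]

lemma hamming_le_walk {d : ℕ} {x y : Fin d → Bool} (p : (Qube d).Walk x y) :
    hammingDist x y ≤ p.length := by
  induction p with
  | nil => simp
  | @cons u v w h p ih =>
    calc hammingDist u w ≤ hammingDist u v + hammingDist v w := hammingDist_triangle _ _ _
    _ ≤ 1 + p.length := by rw [adj_hamming h]; omega
    _ = (SimpleGraph.Walk.cons h p).length := by simp [Nat.add_comm]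

lemma exists_walk {d : ℕ} (x y : Fin d → Bool) :
    ∃ p : (Qube d).Walk x y, p.length = hammingDist x y := by
  generalize hn : hammingDist x y = n
  induction n generalizing x with
  | zero =>
    obtain rfl := hammingDist_eq_zero.mp hn
    exact ⟨SimpleGraph.Walk.nil, rfl⟩
  | succ n ih =>
    have hne : x ≠ y := by
      intro h; rw [h, hammingDist_self] at hn; omega
    obtain ⟨i, hi⟩ : ∃ i, x i ≠ y i := Function.ne_iff.mp hne
    set x' : Fin d → Bool := Function.update x i (y i) with hx'
    have hset : ∀ j, (x j ≠ x' j) ↔ j = i := by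
      intro j
      by_cases hji : j = i
      · subst hji; simp [hx', Function.update_self, hi]
      · simp [hx', Function.update_of_ne hji, hji]
    have hadj : (Qube d).Adj x x' := by
      rw [Qube, SimpleGraph.fromRel_adj]
      constructor
      · intro h
        have : x i = x' i := by rw [← h]
        simp [hx', Function.update_self] at this
        exact hi this
      · left
        have : Finset.filter (fun j => x j ≠ x' j) Finset.univ = {i} := by
          ext j; simp [hset j]
        simp [hammingDist, this]
    have hrest : hammingDist x' y = n := by
      have : Finset.filter (fun j => x' j ≠ y j) Finset.univ
          = (Finset.filter (fun j => x j ≠ y j) Finset.univ).erase i := by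
        ext j
        by_cases hji : j = i
        · subst hji; simp [hx', Function.update_self]
        · simp [hx', Function.update_of_ne hji, hji]
      have hcard : hammingDist x' y
          = (Finset.filter (fun j => x j ≠ y j) Finset.univ).card - 1 := by
        rw [hammingDist, this, Finset.card_erase_of_mem (by simp [hi])]
      rw [hcard]
      have : (Finset.filter (fun j => x j ≠ y j) Finset.univ).card = n + 1 := hn
      omega
    obtain ⟨p, hp⟩ := ih x' hrest
    exact ⟨SimpleGraph.Walk.cons hadj p, by simp [hp, hn, hrest]⟩

lemma dist_eq_hamming {d : ℕ} (x y : Fin d → Bool) :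
    (Qube d).dist x y = hammingDist x y := by
  obtain ⟨p, hp⟩ := exists_walk x y
  refine le_antisymm (hp ▸ SimpleGraph.dist_le p) ?_
  obtain ⟨q, hq⟩ := SimpleGraph.Reachable.exists_walk_length_eq_dist ⟨p⟩
  rw [← hq]; exact hamming_le_walk q

abbrev V3 := Fin 3 → Bool

def vis' (X : Finset V3) (x y : V3) : Prop :=
  ∃ p ∈ (Qube 3).finsetWalkLength (hammingDist x y) x y,
    p.support.Nodup ∧ ∀ z ∈ p.support, z ∈ X → z = x ∨ z = y

instance (X : Finset V3) (x y : V3) : Decidable (vis' X x y) := by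
  unfold vis'; infer_instance

lemma vis'_iff (X : Finset V3) (x y : V3) :
    vis' X x y ↔ IsVisiblePair (Qube 3) ↑X x y := by
  unfold vis' IsVisiblePair
  simp only [SimpleGraph.mem_finsetWalkLength_iff, dist_eq_hamming, Finset.mem_coe,
    ← SimpleGraph.Walk.isPath_def]
  constructor
  · rintro ⟨p, hl, hp, hs⟩; exact ⟨p, hp, hl, hs⟩
  · rintro ⟨p, hp, hl, hs⟩; exact ⟨p, hl, hp, hs⟩

def good (X : Finset V3) : Prop := ∀ x ∈ X, ∀ y ∈ X, vis' X x y

instance : DecidablePred good := fun X => by unfold good; infer_instance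

lemma good_iff (X : Finset V3) : good X ↔ MutualVisSet (Qube 3) ↑X := by
  constructor
  · intro h x hx y hy
    exact (vis'_iff X x y).mp (h x (Finset.mem_coe.mp hx) y (Finset.mem_coe.mp hy))
  · intro h x hx y hy
    exact (vis'_iff X x y).mpr (h x (Finset.mem_coe.mpr hx) y (Finset.mem_coe.mpr hy))

def W : Finset V3 :=
  {![false,false,false], ![false,false,true], ![true,false,false],
   ![true,true,false], ![false,true,true]}

lemma cardW : W.card = 5 := by decide

lemma goodW : good W := by decide

set_option maxHeartbeats 16000000 in
set_option maxRecDepth 20000 in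
lemma bound : ∀ X : Finset V3, good X → X.card ≤ 5 := by decide

/-- `μ(Q_3) = 5`. -/
theorem mu_Q3 : mutualVisNum (Qube 3) = 5 := by
  have h5 : (5 : ℕ) ∈ {n | ∃ X : Set V3, MutualVisSet (Qube 3) X ∧ X.ncard = n} :=
    ⟨↑W, (good_iff W).mp goodW, by rw [Set.ncard_coe_finset, cardW]⟩
  have hub : ∀ n ∈ {n | ∃ X : Set V3, MutualVisSet (Qube 3) X ∧ X.ncard = n}, n ≤ 5 := by
    rintro n ⟨X, hX, rfl⟩
    have hfin : X.Finite := Set.toFinite X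
    have hg : good hfin.toFinset := (good_iff _).mpr (by rwa [hfin.coe_toFinset])
    have hb := bound _ hg
    rwa [← Set.ncard_coe_finset, hfin.coe_toFinset] at hb
  exact le_antisymm (csSup_le ⟨5, h5⟩ hub) (le_csSup ⟨5, hub⟩ h5)
end

section
/- For all d ≥ 6, the inequality C(d, ⌊d/2⌋) + C(d, ⌊d/2⌋+3) > 2^d / √(πd/2) holds, where C(n,k) is the binomial coefficient. -/
/-!
Wallis' inequality `W n ≤ π / 2` says `2 · 16ⁿ ≤ π (2n + 1) C(2n, n)²`; for odd `d` apply it to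
`C(d + 1, (d + 1) / 2) = 2 C(d, ⌊d/2⌋)`. Either way `2 · 4^d ≤ π (2⌈d/2⌉ + 1) C(d, ⌊d/2⌋)²`, so the
central coefficient alone misses `2^d / √(πd/2)` only by a factor `√(1 + O(1/d))`. Since
`C(d, ⌊d/2⌋ + 3) / C(d, ⌊d/2⌋) = ⌈d/2⌉⁽³⁾ / (⌊d/2⌋ + 3)⁽³⁾` (falling factorials) tends to `1`,
adding the second coefficient closes that gap as soon as `d ≥ 7`; for `d = 6` the inequality
`21 > 64 / √(3π) ≈ 20.85` is checked numerically.
-/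

open Real Nat

lemma Real.Wallis.W_eq_centralBinom (n : ℕ) :
    Real.Wallis.W n = 16 ^ n / ((2 * n + 1) * (centralBinom n : ℝ) ^ 2) := by
  have h := choose_mul_factorial_mul_factorial (show n ≤ 2 * n by omega)
  rw [show 2 * n - n = n by omega, ← centralBinom_eq_two_mul_choose] at h
  rw [Real.Wallis.W_eq_factorial_ratio, ← h, pow_mul]
  push_cast
  have : (n ! : ℝ) ≠ 0 := by positivity
  field_simp
  norm_num

lemma two_mul_sixteen_pow_le_pi_mul_centralBinom_sq (n : ℕ) :
    2 * 16 ^ n ≤ π * (2 * n + 1) * (centralBinom n : ℝ) ^ 2 := by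
  have h := Real.Wallis.W_le n
  have := centralBinom_pos n
  rw [Real.Wallis.W_eq_centralBinom, div_le_iff₀ (by positivity)] at h
  linarith

lemma centralBinom_succ_eq_two_mul_choose (n : ℕ) :
    centralBinom (n + 1) = 2 * (2 * n + 1).choose n := by
  rw [centralBinom_eq_two_mul_choose, show 2 * (n + 1) = 2 * n + 1 + 1 by ring,
    choose_succ_succ, choose_symm_half]
  ring

lemma two_mul_four_pow_le_pi_mul_choose_half_sq (d : ℕ) :
    2 * 4 ^ d ≤ π * (2 * (d - d / 2 : ℕ) + 1) * (d.choose (d / 2) : ℝ) ^ 2 := by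
  obtain ⟨n, rfl | rfl⟩ := even_or_odd' d
  · have h := two_mul_sixteen_pow_le_pi_mul_centralBinom_sq n
    rw [centralBinom_eq_two_mul_choose] at h
    rw [show 2 * n - 2 * n / 2 = n by omega, show 2 * n / 2 = n by omega, pow_mul]
    norm_num
    exact h
  · have h := two_mul_sixteen_pow_le_pi_mul_centralBinom_sq (n + 1)
    rw [centralBinom_succ_eq_two_mul_choose, pow_succ] at h
    rw [show 2 * n + 1 - (2 * n + 1) / 2 = n + 1 by omega, show (2 * n + 1) / 2 = n by omega,
      pow_succ, pow_mul]
    push_cast at h ⊢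
    norm_num at h ⊢
    linarith

theorem Nat.choose_add_mul_descFactorial (n k j : ℕ) :
    n.choose (k + j) * (k + j).descFactorial j = n.choose k * (n - k).descFactorial j := by
  induction j with
  | zero => simp
  | succ j ih =>
    rw [← add_assoc, succ_descFactorial_succ, descFactorial_succ, ← mul_assoc,
      choose_succ_right_eq, mul_assoc, mul_comm (n - (k + j)), ← mul_assoc, ih, Nat.sub_sub]
    ring

lemma two_mul_add_one_mul_descFactorial_sq_lt (d : ℕ) (hd : 7 ≤ d) :
    (2 * (d - d / 2) + 1) * (d / 2 + 3).descFactorial 3 ^ 2 <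
      d * ((d / 2 + 3).descFactorial 3 + (d - d / 2).descFactorial 3) ^ 2 := by
  obtain ⟨n, rfl | rfl⟩ := even_or_odd' d
  · obtain ⟨m, rfl⟩ : ∃ m, n = m + 4 := ⟨n - 4, by omega⟩
    rw [show 2 * (m + 4) - 2 * (m + 4) / 2 = m + 4 by omega,
      show 2 * (m + 4) / 2 = m + 4 by omega]
    simp only [succ_descFactorial_succ, descFactorial_zero]
    ring_nf
    omega
  · obtain ⟨m, rfl⟩ : ∃ m, n = m + 3 := ⟨n - 3, by omega⟩
    rw [show 2 * (m + 3) + 1 - (2 * (m + 3) + 1) / 2 = m + 4 by omega,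
      show (2 * (m + 3) + 1) / 2 = m + 3 by omega]
    simp only [succ_descFactorial_succ, descFactorial_zero]
    ring_nf
    omega

lemma mul_sq_lt_mul_add_sq_of_mul_eq {a b c t e x : ℝ} (hc : 0 < c)
    (hct : t * a = c * b) (h : e * a ^ 2 < x * (a + b) ^ 2) :
    e * c ^ 2 < x * (c + t) ^ 2 := by
  have hsum : (c + t) * a = c * (a + b) := by linear_combination hct
  refine lt_of_mul_lt_mul_right ?_ (sq_nonneg a)
  calc e * c ^ 2 * a ^ 2 = c ^ 2 * (e * a ^ 2) := by ring
    _ < c ^ 2 * (x * (a + b) ^ 2) := by gcongr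
    _ = x * (c + t) ^ 2 * a ^ 2 := by rw [mul_assoc x, ← mul_pow, hsum]; ring

lemma two_pow_div_sqrt_lt {d : ℕ} (hd : 0 < d) {s : ℝ} (hs : 0 ≤ s)
    (h : 2 * 4 ^ d < π * d * s ^ 2) : 2 ^ d / √(π * d / 2) < s := by
  rw [div_lt_iff₀ (by positivity), ← sqrt_sq hs, ← sqrt_mul (sq_nonneg s),
    lt_sqrt (by positivity), ← pow_mul, mul_comm d, pow_mul]
  norm_num
  linarith

/-- For all `d ≥ 6`, `C(d, ⌊d/2⌋) + C(d, ⌊d/2⌋+3) > 2^d / √(πd/2)`. -/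
theorem choose_sum_gt (d : ℕ) (hd : 6 ≤ d) :
    (2 : ℝ) ^ d / Real.sqrt (Real.pi * d / 2) <
      (Nat.choose d (d / 2) : ℝ) + (Nat.choose d (d / 2 + 3) : ℝ) := by
  refine two_pow_div_sqrt_lt (by omega) (by positivity) ?_
  obtain rfl | hd7 := hd.eq_or_lt
  · norm_num [choose]
    nlinarith [pi_gt_d2]
  have hc : (0 : ℝ) < d.choose (d / 2) := by exact_mod_cast choose_pos (by omega)
  have hratio : (d.choose (d / 2 + 3) : ℝ) * (d / 2 + 3).descFactorial 3 =
      d.choose (d / 2) * (d - d / 2).descFactorial 3 := by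
    exact_mod_cast choose_add_mul_descFactorial d (d / 2) 3
  have hpoly := two_mul_add_one_mul_descFactorial_sq_lt d hd7
  calc 2 * 4 ^ d ≤ π * (2 * (d - d / 2 : ℕ) + 1) * (d.choose (d / 2) : ℝ) ^ 2 :=
        two_mul_four_pow_le_pi_mul_choose_half_sq d
    _ < π * d * (d.choose (d / 2) + d.choose (d / 2 + 3) : ℝ) ^ 2 := by
      rw [mul_assoc, mul_assoc]
      exact mul_lt_mul_of_pos_left
        (mul_sq_lt_mul_add_sq_of_mul_eq hc hratio (by exact_mod_cast hpoly)) pi_pos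
end

section
/- In the cube-connected cycles graph CCC_d, for every vertex u there exist neighbors v' and v'' of u (lying on different cycles through hypercube edges) such that the path (v', u, v'') is convex, i.e., u is the middle vertex of a convex P_3; consequently no vertex of CCC_d is a bypass vertex. -/
open SimpleGraph

/-- The cube-connected cycles graph `CCC_d`: vertices `[ℓ, x]` with
`ℓ : Fin d`, `x : Fin d → Bool`; cycle edges (same string, consecutive levels
mod `d`) and hypercube edges (same level, bit `ℓ` flipped). -/
def CCC (d : ℕ) : SimpleGraph (Fin d × (Fin d → Bool)) :=
  SimpleGraph.fromRel (fun u v =>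
    (u.2 = v.2 ∧ (v.1 : ℕ) = ((u.1 : ℕ) + 1) % d) ∨
    (u.1 = v.1 ∧ v.2 = Function.update u.2 u.1 (!u.2 u.1)))

lemma convex_triple {V : Type*} (G : SimpleGraph V) (a b c : V)
    (hab : G.Adj a b) (hbc : G.Adj b c) (hac : a ≠ c)
    (hcommon : ∀ z, G.Adj a z → G.Adj z c → z = b) :
    ConvexSet G {a, b, c} := by
  intro x hx y hy p hp hlen z hz
  have hd2 : G.dist x y ≤ 2 := by
    rcases hx with rfl | rfl | rfl <;> rcases hy with rfl | rfl | rfl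
    · simp [SimpleGraph.dist_self]
    · exact le_trans (SimpleGraph.dist_le (Walk.cons hab Walk.nil)) (by simp)
    · exact le_trans (SimpleGraph.dist_le (Walk.cons hab (Walk.cons hbc Walk.nil))) (by simp)
    · exact le_trans (SimpleGraph.dist_le (Walk.cons hab.symm Walk.nil)) (by simp)
    · simp [SimpleGraph.dist_self]
    · exact le_trans (SimpleGraph.dist_le (Walk.cons hbc Walk.nil)) (by simp)
    · exact le_trans (SimpleGraph.dist_le (Walk.cons hbc.symm (Walk.cons hab.symm Walk.nil))) (by simp)
    · exact le_trans (SimpleGraph.dist_le (Walk.cons hbc.symm Walk.nil)) (by simp)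
    · simp [SimpleGraph.dist_self]
  cases p with
  | nil =>
      simp only [Walk.support_nil, List.mem_singleton] at hz
      subst hz; exact hx
  | cons h q =>
    cases q with
    | nil =>
        simp only [Walk.support_cons, Walk.support_nil, List.mem_cons,
          List.not_mem_nil, or_false] at hz
        rcases hz with rfl | rfl
        · exact hx
        · exact hy
    | cons h' q' =>
      cases q' with
      | nil =>
          rename_i w
          have hdist : G.dist x y = 2 := by
            rw [← hlen]; simp
          have hxy : x ≠ y := by
            rintro rfl; rw [SimpleGraph.dist_self] at hdist; omega
          have hnadj : ¬ G.Adj x y := by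
            intro hadj
            have := SimpleGraph.dist_le (Walk.cons hadj (Walk.nil : G.Walk y y))
            simp [hdist] at this
          have hwb : w = b := by
            rcases hx with rfl | rfl | rfl <;> rcases hy with rfl | rfl | rfl
            · exact absurd rfl hxy
            · exact absurd hab hnadj
            · exact hcommon w h h'
            · exact absurd hab.symm hnadj
            · exact absurd rfl hxy
            · exact absurd hbc hnadj
            · exact hcommon w h'.symm h.symm
            · exact absurd hbc.symm hnadj
            · exact absurd rfl hxy
          simp only [Walk.support_cons, Walk.support_nil, List.mem_cons,
            List.not_mem_nil, or_false] at hz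
          rcases hz with rfl | rfl | rfl
          · exact hx
          · rw [hwb]; exact Or.inr (Or.inl rfl)
          · exact hy
      | cons h'' q'' =>
          exfalso
          simp only [Walk.length_cons] at hlen
          omega

/-- In `CCC_d`, every vertex `u` is the middle vertex of a convex `P_3`
`(v', u, v'')` whose endpoints lie on different cycles; hence no vertex of
`CCC_d` is a bypass vertex. -/
theorem ccc_no_bypass (d : ℕ) (hd : 3 ≤ d) (u : Fin d × (Fin d → Bool)) :
    ∃ v' v'' : Fin d × (Fin d → Bool),
      v'.2 ≠ v''.2 ∧ (CCC d).Adj v' u ∧ (CCC d).Adj u v'' ∧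
      ¬ (CCC d).Adj v' v'' ∧ ConvexSet (CCC d) {v', u, v''} := by
  haveI : NeZero d := ⟨by omega⟩
  set ℓ := u.1 with hℓ
  set x := u.2 with hx
  set x' : Fin d → Bool := Function.update x ℓ (!x ℓ) with hx'def
  -- basic facts
  have hx'ℓ : x' ℓ = !x ℓ := Function.update_self ℓ (!x ℓ) x
  have hx'ne : x' ≠ x := by
    intro h
    have := congrFun h ℓ
    rw [hx'ℓ] at this
    exact (Bool.not_ne_self (x ℓ)) this
  have hmod : ∀ a : ℕ, a < d → (a + 1) % d ≠ a := by
    intro a ha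
    rcases Nat.lt_or_ge (a + 1) d with h | h
    · rw [Nat.mod_eq_of_lt h]; omega
    · have : a + 1 = d := by omega
      rw [this, Nat.mod_self]; omega
  have h1 : ((ℓ + 1 : Fin d) : ℕ) = ((ℓ : ℕ) + 1) % d := by
    rw [Fin.add_def]; simp [Fin.val_one']
  have hℓne : (ℓ + 1 : Fin d) ≠ ℓ := by
    intro h
    exact hmod ℓ.val ℓ.isLt (by rw [← h1, h])
  -- double flip
  have hdouble : Function.update x' ℓ (!x' ℓ) = x := by
    funext j
    by_cases hj : j = ℓ
    · subst hj; simp [hx'ℓ, Function.update_self]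
    · simp [Function.update_of_ne hj, hx'def]
  refine ⟨(ℓ, x'), (ℓ + 1, x), hx'ne, ?_, ?_, ?_, ?_⟩
  · -- Adj v' u
    rw [CCC, fromRel_adj]
    refine ⟨?_, Or.inr (Or.inr ⟨rfl, rfl⟩)⟩
    intro h
    exact hx'ne (congrArg Prod.snd h)
  · -- Adj u v''
    rw [CCC, fromRel_adj]
    refine ⟨?_, Or.inl (Or.inl ⟨rfl, h1⟩)⟩
    intro h
    exact hℓne (congrArg Prod.fst h).symm
  · -- ¬ Adj v' v''
    rw [CCC, fromRel_adj]
    rintro ⟨-, (⟨h, -⟩ | ⟨h, -⟩) | (⟨h, -⟩ | ⟨h, -⟩)⟩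
    · exact hx'ne h
    · exact hℓne h.symm
    · exact hx'ne h.symm
    · exact hℓne h
  · -- convexity
    apply convex_triple
    · rw [CCC, fromRel_adj]
      refine ⟨?_, Or.inr (Or.inr ⟨rfl, rfl⟩)⟩
      intro h
      exact hx'ne (congrArg Prod.snd h)
    · rw [CCC, fromRel_adj]
      refine ⟨?_, Or.inl (Or.inl ⟨rfl, h1⟩)⟩
      intro h
      exact hℓne (congrArg Prod.fst h).symm
    · intro h
      exact hx'ne (congrArg Prod.snd h)
    · -- unique common neighbor
      intro z hz1 hz2
      rw [CCC, fromRel_adj] at hz1 hz2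
      obtain ⟨-, hz1⟩ := hz1
      obtain ⟨-, hz2⟩ := hz2
      dsimp only at hz1 hz2
      -- if z.2 = x', contradiction with hz2
      have hzx' : z.2 = x' → False := by
        intro hzx'
        rcases hz2 with (⟨h2, -⟩ | ⟨h2l, h2⟩) | (⟨h2, -⟩ | ⟨h2l, h2⟩)
        · exact hx'ne (hzx' ▸ h2)
        · rw [hzx', h2l] at h2
          have := congrFun h2 ℓ
          rw [Function.update_of_ne (Ne.symm hℓne), hx'ℓ] at this
          exact (Bool.not_ne_self (x ℓ)) this.symm
        · exact hx'ne (hzx' ▸ h2.symm)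
        · rw [hzx'] at h2
          have := congrFun h2 ℓ
          rw [Function.update_of_ne (Ne.symm hℓne), hx'ℓ] at this
          exact (Bool.not_ne_self (x ℓ)) this
      rcases hz1 with (⟨h1s, -⟩ | ⟨h1l, h1s⟩) | (⟨h1s, -⟩ | ⟨h1l, h1s⟩)
      · exact absurd (hzx' h1s.symm) not_false
      · -- z.2 = update x' ℓ (!x' ℓ) = x, z.1 = ℓ
        have : z = (ℓ, x) := by
          refine Prod.ext h1l.symm ?_
          rw [h1s, hdouble]
        rw [this]
      · exact absurd (hzx' h1s) not_false
      · -- x' = update z.2 ℓ (!z.2 ℓ), z.1 = ℓ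
        rw [h1l] at h1s
        have hz2x : z.2 = x := by
          funext j
          by_cases hj : j = ℓ
          · subst hj
            have := congrFun h1s ℓ
            rw [Function.update_self, hx'ℓ] at this
            exact (Bool.not_inj this).symm
          · have h := congrFun h1s j
            rw [Function.update_of_ne hj] at h
            have h2 : x' j = x j := Function.update_of_ne hj _ _
            rw [h2] at h
            exact h.symm
        exact Prod.ext h1l hz2x
end

section
/- The total mutual-visibility number of the cube-connected cycles graph is zero: μ_t(CCC_d) = 0 for all d ≥ 3. -/
open SimpleGraph

private lemma ccc_adj {d : ℕ} (u v : Fin d × (Fin d → Bool)) :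
    (CCC d).Adj u v ↔ u ≠ v ∧
      (((u.2 = v.2 ∧ (v.1 : ℕ) = ((u.1 : ℕ) + 1) % d) ∨
        (u.1 = v.1 ∧ v.2 = Function.update u.2 u.1 (!u.2 u.1))) ∨
       ((v.2 = u.2 ∧ (u.1 : ℕ) = ((v.1 : ℕ) + 1) % d) ∨
        (v.1 = u.1 ∧ u.2 = Function.update v.2 v.1 (!v.2 v.1)))) := by
  rw [CCC, SimpleGraph.fromRel_adj]

/-- `μₜ(CCC_d) = 0` for every `d ≥ 3`. -/
theorem totalMu_CCC (d : ℕ) (hd : 3 ≤ d) : totalMutualVisNum (CCC d) = 0 := by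
  haveI : NeZero d := ⟨by omega⟩
  have h1ne0 : (1 : Fin d) ≠ 0 := by
    intro h
    have := congrArg Fin.val h
    rw [Fin.val_one' d, Nat.mod_eq_of_lt (by omega)] at this
    simp at this
  have key : ∀ X : Set (Fin d × (Fin d → Bool)), TotalMutualVisSet (CCC d) X → X = ∅ := by
    intro X hX
    by_contra hne
    obtain ⟨⟨ℓ, x⟩, hv⟩ := Set.nonempty_iff_ne_empty.2 hne
    have hsub : ℓ - 1 ≠ ℓ := fun h => h1ne0 (sub_eq_self.mp h)
    have hxne : x ≠ Function.update x ℓ (!x ℓ) := by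
      intro h
      have := congrFun h ℓ
      rw [Function.update_self] at this
      simp at this
    have hval : (((ℓ - 1 : Fin d) : ℕ) + 1) % d = (ℓ : ℕ) := by
      have h2 : ((ℓ - 1) + 1 : Fin d) = ℓ := sub_add_cancel ℓ 1
      have h3 := Fin.val_add (ℓ - 1) 1
      rw [h2, Fin.val_one' d, Nat.mod_eq_of_lt (show 1 < d by omega)] at h3
      exact h3.symm
    have hav : (CCC d).Adj (ℓ - 1, x) (ℓ, x) := by
      rw [ccc_adj]
      refine ⟨fun h => hsub (congrArg Prod.fst h), Or.inl (Or.inl ⟨rfl, hval.symm⟩)⟩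
    have hvb : (CCC d).Adj (ℓ, x) (ℓ, Function.update x ℓ (!x ℓ)) := by
      rw [ccc_adj]
      refine ⟨fun h => hxne (congrArg Prod.snd h), Or.inl (Or.inr ⟨rfl, rfl⟩)⟩
    have habne : ((ℓ - 1 : Fin d), x) ≠ (ℓ, Function.update x ℓ (!x ℓ)) := by
      intro h
      exact hsub (congrArg Prod.fst h)
    have hnadj : ¬ (CCC d).Adj (ℓ - 1, x) (ℓ, Function.update x ℓ (!x ℓ)) := by
      rw [ccc_adj]
      rintro ⟨-, h⟩
      dsimp only at h
      rcases h with (⟨h2, -⟩ | ⟨h1, -⟩) | (⟨h2, -⟩ | ⟨h1, -⟩)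
      · exact hxne h2
      · exact hsub h1
      · exact hxne h2.symm
      · exact hsub h1.symm
    have lemA : ∀ w, (CCC d).Adj (ℓ - 1, x) w → w.2 ℓ = x ℓ := by
      intro w hw
      rw [ccc_adj] at hw
      obtain ⟨-, hw⟩ := hw
      dsimp only at hw
      rcases hw with (⟨h2, -⟩ | ⟨h1, h2⟩) | (⟨h2, -⟩ | ⟨h1, h2⟩)
      · exact (congrFun h2 ℓ).symm
      · rw [h2]
        exact Function.update_of_ne (Ne.symm hsub) _ _
      · exact congrFun h2 ℓ
      · have h3 := congrFun h2 ℓ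
        rw [h1, Function.update_of_ne (Ne.symm hsub)] at h3
        exact h3.symm
    have lemB : ∀ w, (CCC d).Adj w (ℓ, Function.update x ℓ (!x ℓ)) →
        w = (ℓ, x) ∨ w.2 ℓ = !(x ℓ) := by
      intro w hw
      rw [ccc_adj] at hw
      obtain ⟨-, hw⟩ := hw
      dsimp only at hw
      rcases hw with (⟨h2, -⟩ | ⟨h1, h2⟩) | (⟨h2, -⟩ | ⟨h1, h2⟩)
      · right
        have h3 := congrFun h2 ℓ
        rw [Function.update_self] at h3
        exact h3
      · left
        rw [h1] at h2
        refine Prod.ext h1 (funext fun j => ?_)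
        have hj := congrFun h2 j
        by_cases hjl : j = ℓ
        · subst hjl
          rw [Function.update_self, Function.update_self] at hj
          exact Bool.not_inj hj.symm
        · rw [Function.update_of_ne hjl, Function.update_of_ne hjl] at hj
          exact hj.symm
      · right
        have h3 := congrFun h2 ℓ
        rw [Function.update_self] at h3
        exact h3.symm
      · left
        refine Prod.ext h1.symm (funext fun j => ?_)
        have hj := congrFun h2 j
        by_cases hjl : j = ℓ
        · subst hjl
          simp only [Function.update_self] at hj
          simpa using hj
        · simp only [Function.update_of_ne hjl] at hj
          simpa using hj
    have hdist : (CCC d).dist (ℓ - 1, x) (ℓ, Function.update x ℓ (!x ℓ)) = 2 := by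
      have hle := SimpleGraph.dist_le ((hav.toWalk).append (hvb.toWalk))
      simp only [SimpleGraph.Walk.length_append, SimpleGraph.Adj.toWalk,
        SimpleGraph.Walk.length_cons, SimpleGraph.Walk.length_nil] at hle
      have hpos := SimpleGraph.Reachable.pos_dist_of_ne
        ⟨(hav.toWalk).append (hvb.toWalk)⟩ habne
      have hne1 : (CCC d).dist (ℓ - 1, x) (ℓ, Function.update x ℓ (!x ℓ)) ≠ 1 :=
        fun h => hnadj (SimpleGraph.dist_eq_one_iff_adj.mp h)
      omega
    obtain ⟨p, hp, hlen, hvis⟩ := hX (ℓ - 1, x) (ℓ, Function.update x ℓ (!x ℓ))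
    rw [hdist] at hlen
    set w := p.getVert 1 with hwdef
    have haw : (CCC d).Adj (ℓ - 1, x) w := by
      have := p.adj_getVert_succ (i := 0) (by omega)
      rwa [p.getVert_zero] at this
    have hwb : (CCC d).Adj w (ℓ, Function.update x ℓ (!x ℓ)) := by
      have := p.adj_getVert_succ (i := 1) (by omega)
      rw [show (1 + 1 : ℕ) = p.length by omega, p.getVert_length] at this
      exact this
    have hw : w = (ℓ, x) := by
      rcases lemB w hwb with h' | h'
      · exact h'
      · rw [lemA w haw] at h'
        simp at h'
    have hmem : w ∈ p.support := by
      rw [SimpleGraph.Walk.mem_support_iff_exists_getVert]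
      exact ⟨1, rfl, by omega⟩
    rcases hvis w hmem (by rw [hw]; exact hv) with h' | h'
    · rw [hw] at h'
      exact hsub (congrArg Prod.fst h').symm
    · rw [hw] at h'
      exact hxne (congrArg Prod.snd h')
  have hS : {n | ∃ X : Set (Fin d × (Fin d → Bool)),
      TotalMutualVisSet (CCC d) X ∧ X.ncard = n} ⊆ {0} := by
    rintro n ⟨X, hX, rfl⟩
    simp [key X hX]
  unfold totalMutualVisNum
  rcases Set.subset_singleton_iff_eq.mp hS with h | h
  · rw [h, csSup_empty]; rfl
  · rw [h]; exact csSup_singleton 0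
end

section
/- In the butterfly graph BF(d), every column A_i = { [ℓ, i] : 0 ≤ ℓ ≤ d } induces a convex subgraph isomorphic to a path on d+1 vertices, and consequently any mutual-visibility set X of BF(d) satisfies |X ∩ A_i| ≤ 2 for every column i. -/
open SimpleGraph

/-- The butterfly graph `BF(d)`: vertices `[ℓ, c]` with level `ℓ : Fin (d+1)`
and column `c : Fin d → Bool`; `[ℓ,c]` and `[ℓ+1,c']` are adjacent iff `c` and
`c'` agree on every bit other than bit `ℓ` (so `c = c'` or they differ exactly
in bit `ℓ`). -/
def BF (d : ℕ) : SimpleGraph (Fin (d + 1) × (Fin d → Bool)) :=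
  SimpleGraph.fromRel (fun u v =>
    (u.1 : ℕ) + 1 = (v.1 : ℕ) ∧ ∀ i : Fin d, (i : ℕ) ≠ (u.1 : ℕ) → u.2 i = v.2 i)

section Aux

variable {d : ℕ}

local notation "V" => Fin (d + 1) × (Fin d → Bool)

lemma bf_adj_iff {u v : V} : (BF d).Adj u v ↔ u ≠ v ∧
    (((u.1 : ℕ) + 1 = (v.1 : ℕ) ∧ ∀ i : Fin d, (i : ℕ) ≠ (u.1 : ℕ) → u.2 i = v.2 i) ∨
     ((v.1 : ℕ) + 1 = (u.1 : ℕ) ∧ ∀ i : Fin d, (i : ℕ) ≠ (v.1 : ℕ) → v.2 i = u.2 i)) := by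
  simp [BF, SimpleGraph.fromRel_adj]

/-- Every edge changes the level by exactly one, so walks are at least as long as the
level gap. -/
lemma level_le_length {u v : V} (w : (BF d).Walk u v) :
    Nat.dist (u.1 : ℕ) (v.1 : ℕ) ≤ w.length := by
  induction w with
  | nil => simp [Nat.dist]
  | cons h p ih =>
    rename_i a b x
    rcases (bf_adj_iff.mp h).2 with ⟨h1, -⟩ | ⟨h1, -⟩ <;>
      · rw [SimpleGraph.Walk.length_cons]
        simp only [Nat.dist] at *
        omega

/-- A step at the start of a level-tight upward walk goes up, touching only the bit at
the starting level. -/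
lemma step_up {u u' v : V} (h : (BF d).Adj u u') (w' : (BF d).Walk u' v)
    (hl : w'.length + 1 + (u.1 : ℕ) = (v.1 : ℕ)) :
    (u'.1 : ℕ) = (u.1 : ℕ) + 1 ∧ ∀ i : Fin d, (i : ℕ) ≠ (u.1 : ℕ) → u.2 i = u'.2 i := by
  rcases (bf_adj_iff.mp h).2 with ⟨h1, h2⟩ | ⟨h1, h2⟩
  · exact ⟨h1.symm, h2⟩
  · exfalso
    have := level_le_length w'
    simp only [Nat.dist] at this
    omega

/-- Along a level-tight upward walk, bits outside the level range are unchanged. -/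
lemma bits_outside {u v : V} (w : (BF d).Walk u v)
    (hl : w.length + (u.1 : ℕ) = (v.1 : ℕ)) :
    ∀ i : Fin d, ((i : ℕ) < (u.1 : ℕ) ∨ (v.1 : ℕ) ≤ (i : ℕ)) → u.2 i = v.2 i := by
  induction w with
  | nil => intro i _; rfl
  | cons h p ih =>
    rename_i a b x
    rw [SimpleGraph.Walk.length_cons] at hl
    obtain ⟨hup, hbits⟩ := step_up h p (by omega)
    intro i hi
    have h1 : a.2 i = b.2 i := hbits i (by omega)
    have h2 : b.2 i = x.2 i := ih (by omega) i (by omega)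
    rw [h1, h2]

/-- A level-tight upward walk visits every level in between. -/
lemma level_hit {u v : V} (w : (BF d).Walk u v)
    (hl : w.length + (u.1 : ℕ) = (v.1 : ℕ)) :
    ∀ m : ℕ, (u.1 : ℕ) ≤ m → m ≤ (v.1 : ℕ) → ∃ z ∈ w.support, (z.1 : ℕ) = m := by
  induction w with
  | nil =>
    intro m h1 h2
    refine ⟨_, SimpleGraph.Walk.start_mem_support _, ?_⟩
    omega
  | cons h p ih =>
    rename_i a b x
    rw [SimpleGraph.Walk.length_cons] at hl
    obtain ⟨hup, -⟩ := step_up h p (by omega)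
    intro m h1 h2
    rcases eq_or_lt_of_le h1 with he | hlt
    · exact ⟨a, by simp, he⟩
    · obtain ⟨z, hz, hzm⟩ := ih (by omega) m (by omega) h2
      exact ⟨z, by simp [hz], hzm⟩

/-- Any vertex on a level-tight walk between two vertices of a column lies in that
column, in the upward case. -/
lemma col_support_le {c : Fin d → Bool} {u v : V} (hu : u.2 = c) (hv : v.2 = c)
    (w : (BF d).Walk u v) (hw : w.length + (u.1 : ℕ) = (v.1 : ℕ)) :
    ∀ z ∈ w.support, z.2 = c := by
  intro z hz
  have hspec := w.take_spec hz
  have hlen : (w.takeUntil z hz).length + (w.dropUntil z hz).length = w.length := by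
    have := congr_arg SimpleGraph.Walk.length hspec
    rwa [SimpleGraph.Walk.length_append] at this
  have h1 := level_le_length (w.takeUntil z hz)
  have h2 := level_le_length (w.dropUntil z hz)
  simp only [Nat.dist] at h1 h2
  have ht : (w.takeUntil z hz).length + (u.1 : ℕ) = (z.1 : ℕ) := by omega
  have hd : (w.dropUntil z hz).length + (z.1 : ℕ) = (v.1 : ℕ) := by omega
  have b1 := bits_outside (w.takeUntil z hz) ht
  have b2 := bits_outside (w.dropUntil z hz) hd
  funext i
  by_cases hiz : (i : ℕ) < (z.1 : ℕ)
  · have := b2 i (Or.inl hiz)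
    rw [this, hv]
  · have := b1 i (Or.inr (by omega))
    rw [← this, hu]

/-- Any vertex on a level-tight walk between two vertices of a column lies in that
column. -/
lemma col_support {c : Fin d → Bool} {u v : V} (hu : u.2 = c) (hv : v.2 = c)
    (w : (BF d).Walk u v) (hw : w.length = Nat.dist (u.1 : ℕ) (v.1 : ℕ)) :
    ∀ z ∈ w.support, z.2 = c := by
  rcases le_or_gt (u.1 : ℕ) (v.1 : ℕ) with h | h
  · exact col_support_le hu hv w (by simp only [Nat.dist] at hw; omega)
  · intro z hz
    refine col_support_le hv hu w.reverse ?_ z ?_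
    · rw [SimpleGraph.Walk.length_reverse]
      simp only [Nat.dist] at hw ⊢
      omega
    · rw [SimpleGraph.Walk.support_reverse, List.mem_reverse]
      exact hz

/-- There is a walk within a column whose length is the level gap (upward case). -/
lemma exists_col_walk_up (c : Fin d → Bool) :
    ∀ n (a b : Fin (d + 1)), (a : ℕ) + n = (b : ℕ) →
      ∃ w : (BF d).Walk (a, c) (b, c), w.length = n := by
  intro n
  induction n with
  | zero =>
    intro a b hab
    have : a = b := Fin.ext (by omega)
    subst this
    exact ⟨SimpleGraph.Walk.nil, rfl⟩
  | succ n ih =>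
    intro a b hab
    have ha : (a : ℕ) + 1 < d + 2 := by have := b.isLt; omega
    set a' : Fin (d + 1) := ⟨(a : ℕ) + 1, by have := b.isLt; omega⟩ with ha'
    have hadj : (BF d).Adj (a, c) (a', c) := by
      rw [bf_adj_iff]
      refine ⟨?_, Or.inl ⟨rfl, fun i _ => rfl⟩⟩
      intro hcon
      have : a = a' := congr_arg Prod.fst hcon
      have : (a : ℕ) = (a : ℕ) + 1 := congr_arg Fin.val this
      omega
    obtain ⟨w', hw'⟩ := ih a' b (by simp [ha']; omega)
    exact ⟨SimpleGraph.Walk.cons hadj w', by simp [hw']⟩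

lemma exists_col_walk (c : Fin d → Bool) (a b : Fin (d + 1)) :
    ∃ w : (BF d).Walk (a, c) (b, c), w.length = Nat.dist (a : ℕ) (b : ℕ) := by
  rcases le_or_gt (a : ℕ) (b : ℕ) with h | h
  · obtain ⟨w, hw⟩ := exists_col_walk_up c ((b : ℕ) - (a : ℕ)) a b (by omega)
    exact ⟨w, by simp only [Nat.dist]; omega⟩
  · obtain ⟨w, hw⟩ := exists_col_walk_up c ((a : ℕ) - (b : ℕ)) b a (by omega)
    exact ⟨w.reverse, by rw [SimpleGraph.Walk.length_reverse, hw]; simp only [Nat.dist]; omega⟩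

lemma bf_dist_col (c : Fin d → Bool) (a b : Fin (d + 1)) :
    (BF d).dist (a, c) (b, c) = Nat.dist (a : ℕ) (b : ℕ) := by
  obtain ⟨w, hw⟩ := exists_col_walk c a b
  refine le_antisymm (hw ▸ SimpleGraph.dist_le w) ?_
  obtain ⟨p, hp⟩ := (SimpleGraph.Walk.reachable w).exists_walk_length_eq_dist
  calc Nat.dist (a : ℕ) (b : ℕ) ≤ p.length := level_le_length p
    _ = _ := hp

end Aux

/-- In `BF(d)`, every column is a convex subgraph isomorphic to a path on
`d + 1` vertices, and consequently every mutual-visibility set meets every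
column in at most two vertices. -/
theorem bf_column (d : ℕ) (c : Fin d → Bool) :
    ConvexSet (BF d) {u : Fin (d + 1) × (Fin d → Bool) | u.2 = c} ∧
    Nonempty ((SimpleGraph.induce {u : Fin (d + 1) × (Fin d → Bool) | u.2 = c} (BF d)) ≃g
      SimpleGraph.pathGraph (d + 1)) ∧
    ∀ X : Set (Fin (d + 1) × (Fin d → Bool)), MutualVisSet (BF d) X →
      (X ∩ {u | u.2 = c}).ncard ≤ 2 := by
  refine ⟨?_, ?_, ?_⟩
  · -- convexity
    intro x hx y hy p _ hlen z hz
    have hx' : x = (x.1, c) := Prod.ext rfl hx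
    have hy' : y = (y.1, c) := Prod.ext rfl hy
    have hdist : (BF d).dist x y = Nat.dist (x.1 : ℕ) (y.1 : ℕ) := by
      rw [hx', hy']; exact bf_dist_col c x.1 y.1
    exact col_support hx hy p (by rw [hlen, hdist]) z hz
  · -- isomorphism with path graph
    refine ⟨⟨⟨fun u => u.1.1, fun ℓ => ⟨(ℓ, c), rfl⟩, ?_, ?_⟩, ?_⟩⟩
    · rintro ⟨⟨ℓ, c'⟩, h⟩
      have : c' = c := h
      subst this
      rfl
    · intro ℓ; rfl
    · rintro ⟨⟨ℓ, c1⟩, h1⟩ ⟨⟨ℓ', c2⟩, h2⟩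
      have hc1 : c1 = c := h1
      have hc2 : c2 = c := h2
      subst c1; subst c2
      show (SimpleGraph.pathGraph (d + 1)).Adj ℓ ℓ' ↔ (BF d).Adj (ℓ, c) (ℓ', c)
      rw [bf_adj_iff, SimpleGraph.pathGraph_adj]
      constructor
      · intro h
        have hne : (ℓ : ℕ) ≠ (ℓ' : ℕ) := by omega
        refine ⟨fun hcon => hne ?_, ?_⟩
        · exact congrArg (fun q : Fin (d + 1) × (Fin d → Bool) => ((q.1 : Fin (d + 1)) : ℕ)) hcon
        · rcases h with h | h
          · exact Or.inl ⟨h, fun i _ => rfl⟩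
          · exact Or.inr ⟨h, fun i _ => rfl⟩
      · rintro ⟨-, (⟨h, -⟩ | ⟨h, -⟩)⟩
        · exact Or.inl h
        · exact Or.inr h
  · -- mutual-visibility bound
    intro X hX
    by_contra hcon
    push_neg at hcon
    obtain ⟨t, hts, htc⟩ := Set.exists_subset_card_eq (show 3 ≤ (X ∩ {u | u.2 = c}).ncard from hcon)
    obtain ⟨x, y, z, hxy, hxz, hyz, rfl⟩ := Set.ncard_eq_three.mp htc
    have hx := hts (by simp : x ∈ ({x, y, z} : Set _))
    have hy := hts (by simp : y ∈ ({x, y, z} : Set _))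
    have hz := hts (by simp : z ∈ ({x, y, z} : Set _))
    have hxc : x.2 = c := hx.2
    have hyc : y.2 = c := hy.2
    have hzc : z.2 = c := hz.2
    have hx' : x = (x.1, c) := Prod.ext rfl hxc
    have hy' : y = (y.1, c) := Prod.ext rfl hyc
    have hz' : z = (z.1, c) := Prod.ext rfl hzc
    -- the core argument for an ordered triple
    have core : ∀ a b e : Fin (d + 1), (a : ℕ) < (b : ℕ) → (b : ℕ) < (e : ℕ) →
        (a, c) ∈ X → (b, c) ∈ X → (e, c) ∈ X → False := by
      intro a b e hab hbe ha hb he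
      obtain ⟨p, -, hlen, havoid⟩ := hX _ ha _ he
      rw [bf_dist_col c a e] at hlen
      have hup : p.length + ((a, c).1 : ℕ) = ((e, c).1 : ℕ) := by
        simp only [Nat.dist] at hlen; simp; omega
      obtain ⟨w, hwmem, hwlev⟩ := level_hit p hup (b : ℕ) (le_of_lt hab) (le_of_lt hbe)
      have hwc : w.2 = c := col_support (u := (a, c)) (v := (e, c)) rfl rfl p (by exact hlen) w hwmem
      have hwb : w = (b, c) := Prod.ext (Fin.ext (by simpa using hwlev)) hwc
      rcases havoid w hwmem (hwb ▸ hb) with h | h <;>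
        · rw [hwb] at h
          have := congr_arg (fun q => ((Prod.fst q : Fin (d+1)) : ℕ)) h
          simp at this
          omega
    -- levels are pairwise distinct
    have lxy : (x.1 : ℕ) ≠ (y.1 : ℕ) := fun h => hxy (by
      rw [hx', hy']; exact Prod.ext (Fin.ext h) rfl)
    have lxz : (x.1 : ℕ) ≠ (z.1 : ℕ) := fun h => hxz (by
      rw [hx', hz']; exact Prod.ext (Fin.ext h) rfl)
    have lyz : (y.1 : ℕ) ≠ (z.1 : ℕ) := fun h => hyz (by
      rw [hy', hz']; exact Prod.ext (Fin.ext h) rfl)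
    have mx : (x.1, c) ∈ X := hx' ▸ hx.1
    have my : (y.1, c) ∈ X := hy' ▸ hy.1
    have mz : (z.1, c) ∈ X := hz' ▸ hz.1
    rcases lt_or_gt_of_ne lxy with h1 | h1 <;> rcases lt_or_gt_of_ne lxz with h2 | h2 <;>
      rcases lt_or_gt_of_ne lyz with h3 | h3
    · exact core _ _ _ h1 h3 mx my mz
    · exact core _ _ _ h2 h3 mx mz my
    · omega
    · exact core _ _ _ h2 h1 mz mx my
    · exact core _ _ _ h1 h2 my mx mz
    · omega
    · exact core _ _ _ h3 h2 my mz mx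
    · exact core _ _ _ h3 h1 mz my mx
end

section
/- In the butterfly graph BF(d), the set X = (L_0 ∪ L_d) \ { [0, 11...1], [d, 11...1] }, consisting of all vertices at levels 0 and d except the two all-ones-column endpoints, is a mutual-visibility set of size 2^{d+1} - 2. -/
open SimpleGraph

/-! Every edge of `BF(d)` changes the level by one, and bit `k` of the column can change only
along an edge between levels `k` and `k + 1`. So two columns at level `0` whose highest differing
bit is `k` are at distance at least `2 (k + 1)`; this is attained by climbing to level `k + 1` while
setting bits `0, …, k` to `1` and descending back, a route that meets level `d` only if `k + 1 = d`,
and then in `[d, 11…1]`. Dually at level `d`, with the lowest differing bit `k`, descend to level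
`k` setting bits `k, …, d - 1` to `1`; this meets level `0` only in `[0, 11…1]`. Between levels `0`
and `d` the monotone walk of length `d` meets `L₀ ∪ L_d` only at its ends. -/

theorem isVisiblePair_of_forall_length_le {V : Type*} {G : SimpleGraph V} {X : Set V}
    {x y : V} (p : G.Walk x y) (hmin : ∀ q : G.Walk x y, p.length ≤ q.length)
    (hX : ∀ z ∈ p.support, z ∈ X → z = x ∨ z = y) : IsVisiblePair G X x y := by
  classical
  obtain ⟨q, hq⟩ := Reachable.exists_walk_length_eq_dist ⟨p⟩
  refine ⟨p.bypass, p.bypass_isPath, le_antisymm ?_ (dist_le _),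
    fun z hz => hX z (p.support_bypass_subset_support hz)⟩
  calc p.bypass.length ≤ p.length := p.length_bypass_le_length
    _ ≤ q.length := hmin q
    _ = G.dist x y := hq

theorem IsVisiblePair.symm {V : Type*} {G : SimpleGraph V} {X : Set V} {x y : V}
    (h : IsVisiblePair G X x y) : IsVisiblePair G X y x := by
  obtain ⟨p, hp, hlen, hX⟩ := h
  refine ⟨p.reverse, hp.reverse, by rw [Walk.length_reverse, hlen, dist_comm], ?_⟩
  intro z hz hzX
  rw [Walk.support_reverse, List.mem_reverse] at hz
  exact (hX z hz hzX).symm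

theorem Function.exists_ne_forall_gt_eq {ι β : Type*} [LinearOrder ι] [Finite ι] {f g : ι → β}
    (h : f ≠ g) : ∃ k, f k ≠ g k ∧ ∀ i, k < i → f i = g i := by
  obtain ⟨k, hk, hmax⟩ := Set.Finite.exists_maximal (Set.toFinite {i | f i ≠ g i})
    (Function.ne_iff.1 h)
  exact ⟨k, hk, fun i hi => by_contra fun hne => (hmax hne hi.le).not_gt hi⟩

theorem Function.exists_ne_forall_lt_eq {ι β : Type*} [LinearOrder ι] [Finite ι] {f g : ι → β}
    (h : f ≠ g) : ∃ k, f k ≠ g k ∧ ∀ i, i < k → f i = g i :=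
  Function.exists_ne_forall_gt_eq (ι := ιᵒᵈ) h

namespace BF

variable {d : ℕ}

theorem adj_cases {u v : Fin (d + 1) × (Fin d → Bool)} (h : (BF d).Adj u v) :
    ((u.1 : ℕ) + 1 = v.1 ∧ ∀ i : Fin d, (i : ℕ) ≠ u.1 → u.2 i = v.2 i) ∨
    ((v.1 : ℕ) + 1 = u.1 ∧ ∀ i : Fin d, (i : ℕ) ≠ v.1 → u.2 i = v.2 i) := by
  obtain ⟨-, h | ⟨hl, hc⟩⟩ := (fromRel_adj _ _ _).1 h
  · exact Or.inl h
  · exact Or.inr ⟨hl, fun i hi => (hc i hi).symm⟩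

theorem adj_of_succ {u v : Fin (d + 1) × (Fin d → Bool)} (hl : (u.1 : ℕ) + 1 = v.1)
    (hc : ∀ i : Fin d, (i : ℕ) ≠ u.1 → u.2 i = v.2 i) : (BF d).Adj u v :=
  (fromRel_adj _ _ _).2 ⟨fun h => by rw [h] at hl; omega, Or.inl ⟨hl, hc⟩⟩

theorem level_le_add_length {u v : Fin (d + 1) × (Fin d → Bool)} (p : (BF d).Walk u v) :
    (u.1 : ℕ) ≤ v.1 + p.length ∧ (v.1 : ℕ) ≤ u.1 + p.length := by
  induction p with
  | nil => simp
  | cons h q ih =>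
    rw [Walk.length_cons]
    rcases adj_cases h with ⟨hl, -⟩ | ⟨hl, -⟩ <;> omega

theorem length_ge_of_mem_support {u v z : Fin (d + 1) × (Fin d → Bool)}
    (p : (BF d).Walk u v) (hz : z ∈ p.support) :
    (z.1 : ℕ) - u.1 + (z.1 - v.1) ≤ p.length ∧ (u.1 : ℕ) - z.1 + (v.1 - z.1) ≤ p.length := by
  classical
  have hsplit : p.length = (p.takeUntil z hz).length + (p.dropUntil z hz).length := by
    rw [← Walk.length_append, p.take_spec hz]
  have h₁ := level_le_add_length (p.takeUntil z hz)
  have h₂ := level_le_add_length (p.dropUntil z hz)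
  omega

theorem exists_levels_of_bit_ne {u v : Fin (d + 1) × (Fin d → Bool)} (p : (BF d).Walk u v)
    {k : Fin d} (hk : u.2 k ≠ v.2 k) :
    (∃ z ∈ p.support, (z.1 : ℕ) = k) ∧ ∃ z ∈ p.support, (z.1 : ℕ) = k + 1 := by
  induction p with
  | nil => exact absurd rfl hk
  | @cons u w v h q ih =>
    by_cases hw : w.2 k = v.2 k
    · have huw : u.2 k ≠ w.2 k := hw ▸ hk
      rcases adj_cases h with ⟨hl, hc⟩ | ⟨hl, hc⟩
      · have : (k : ℕ) = u.1 := by_contra fun hne => huw (hc k hne)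
        exact ⟨⟨u, by simp, this.symm⟩, ⟨w, by simp, by omega⟩⟩
      · have : (k : ℕ) = w.1 := by_contra fun hne => huw (hc k hne)
        exact ⟨⟨w, by simp, this.symm⟩, ⟨u, by simp, by omega⟩⟩
    · obtain ⟨⟨z, hz, hzk⟩, ⟨z', hz', hz'k⟩⟩ := ih hw
      exact ⟨⟨z, by simp [hz], hzk⟩, ⟨z', by simp [hz'], hz'k⟩⟩

theorem exists_walk_up {u v : Fin (d + 1) × (Fin d → Bool)} (huv : (u.1 : ℕ) ≤ v.1)
    (hc : ∀ i : Fin d, (i : ℕ) < u.1 ∨ (v.1 : ℕ) ≤ i → u.2 i = v.2 i) :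
    ∃ p : (BF d).Walk u v, p.length = v.1 - u.1 ∧ ∀ z ∈ p.support,
      (u.1 : ℕ) ≤ z.1 ∧ (z.1 : ℕ) ≤ v.1 ∧ (∀ i : Fin d, (i : ℕ) < z.1 → z.2 i = v.2 i) ∧
        ∀ i : Fin d, (z.1 : ℕ) ≤ i → z.2 i = u.2 i := by
  obtain ⟨n, hn⟩ := Nat.exists_eq_add_of_le huv
  clear huv
  induction n generalizing u with
  | zero =>
    have : u = v := Prod.ext (Fin.ext hn.symm) (funext fun i => hc i (by omega))
    subst this
    exact ⟨Walk.nil, by simp, by simp⟩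
  | succ n ih =>
    let w : Fin (d + 1) × (Fin d → Bool) :=
      (⟨u.1 + 1, by omega⟩, fun i => if (i : ℕ) = u.1 then v.2 i else u.2 i)
    have huw : (BF d).Adj u w := adj_of_succ rfl fun i hi => (if_neg hi).symm
    have hwv : ∀ i : Fin d, (i : ℕ) < w.1 ∨ (v.1 : ℕ) ≤ i → w.2 i = v.2 i := fun i hi => by
      change (i : ℕ) < u.1 + 1 ∨ _ at hi
      change (if (i : ℕ) = u.1 then v.2 i else u.2 i) = _
      split_ifs with h
      · rfl
      · exact hc i (by omega)
    obtain ⟨q, hlen, hq⟩ := ih hwv (show (v.1 : ℕ) = u.1 + 1 + n by omega)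
    change q.length = (v.1 : ℕ) - (u.1 + 1) at hlen
    refine ⟨Walk.cons huw q, by rw [Walk.length_cons, hlen]; omega, ?_⟩
    intro z hz
    rcases (Walk.mem_support_iff _).1 hz with rfl | hz
    · exact ⟨le_rfl, by omega, fun i hi => hc i (Or.inl hi), fun i hi => rfl⟩
    · obtain ⟨h₁, h₂, h₃, h₄⟩ := hq z hz
      change (u.1 : ℕ) + 1 ≤ z.1 at h₁
      refine ⟨by omega, h₂, h₃, fun i hi => ?_⟩
      rw [h₄ i (by omega)]
      exact if_neg (by omega)

variable {X : Set (Fin (d + 1) × (Fin d → Bool))}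

theorem isVisiblePair_zero_last (hX : ∀ z ∈ X, z.1 = 0 ∨ z.1 = Fin.last d)
    (c c' : Fin d → Bool) : IsVisiblePair (BF d) X (0, c) (Fin.last d, c') := by
  obtain ⟨p, hlen, hp⟩ := exists_walk_up (u := (0, c)) (v := (Fin.last d, c'))
    (by simp) fun i hi => by change (i : ℕ) < 0 ∨ d ≤ i at hi; omega
  refine isVisiblePair_of_forall_length_le p (fun q => ?_) fun z hz hzX => ?_
  · have := (level_le_add_length q).2
    simp only [Fin.val_last, Fin.val_zero] at hlen this
    omega
  · obtain ⟨-, -, hbelow, habove⟩ := hp z hz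
    rcases hX z hzX with h | h
    · exact Or.inl (Prod.ext h (funext fun i => habove i (by simp [h])))
    · exact Or.inr (Prod.ext h (funext fun i => hbelow i (by simp [h])))

theorem isVisiblePair_zero_zero (hX : ∀ z ∈ X, z.1 = 0 ∨ z.1 = Fin.last d)
    (hones : (Fin.last d, fun _ => true) ∉ X) (c c' : Fin d → Bool) :
    IsVisiblePair (BF d) X (0, c) (0, c') := by
  rcases eq_or_ne c c' with rfl | hne
  · exact isVisiblePair_of_forall_length_le Walk.nil (fun q => by simp) (by simp)
  obtain ⟨k, hk, hmax⟩ := Function.exists_ne_forall_gt_eq hne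
  let w : Fin (d + 1) × (Fin d → Bool) :=
    (⟨k + 1, by omega⟩, fun i => if i ≤ k then true else c i)
  obtain ⟨p₁, hlen₁, hp₁⟩ := exists_walk_up (u := (0, c)) (v := w) (by simp) fun i hi => by
    change (i : ℕ) < 0 ∨ (k : ℕ) + 1 ≤ i at hi
    show c i = if i ≤ k then true else c i
    rw [if_neg (by rw [Fin.le_def]; omega)]
  obtain ⟨p₂, hlen₂, hp₂⟩ := exists_walk_up (u := (0, c')) (v := w) (by simp) fun i hi => by
    change (i : ℕ) < 0 ∨ (k : ℕ) + 1 ≤ i at hi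
    show c' i = if i ≤ k then true else c i
    rw [if_neg (by rw [Fin.le_def]; omega), hmax i (by rw [Fin.lt_def]; omega)]
  change p₁.length = k + 1 - 0 at hlen₁
  change p₂.length = k + 1 - 0 at hlen₂
  have hpeak : ∀ z : Fin (d + 1) × (Fin d → Bool), (z.1 : ℕ) ≤ k + 1 →
      (∀ i : Fin d, (i : ℕ) < z.1 → z.2 i = w.2 i) → z.1 = Fin.last d →
      z = (Fin.last d, fun _ => true) := fun z hzk hbelow h => by
    simp only [h, Fin.val_last] at hzk hbelow
    exact Prod.ext h <| funext fun i =>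
      (hbelow i i.isLt).trans (if_pos (by rw [Fin.le_def]; omega))
  refine isVisiblePair_of_forall_length_le (p₁.append p₂.reverse) (fun q => ?_)
    fun z hz hzX => ?_
  · obtain ⟨-, z, hz, hzk⟩ := exists_levels_of_bit_ne q hk
    have := (length_ge_of_mem_support q hz).1
    simp only [Walk.length_append, Walk.length_reverse, Fin.val_zero] at this ⊢
    omega
  rw [Walk.mem_support_append_iff, Walk.support_reverse, List.mem_reverse] at hz
  rcases hz with hz | hz
  · obtain ⟨-, hzk, hbelow, habove⟩ := hp₁ z hz
    rcases hX z hzX with h | h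
    · exact Or.inl (Prod.ext h (funext fun i => habove i (by simp [h])))
    · exact absurd (hpeak z hzk hbelow h ▸ hzX) hones
  · obtain ⟨-, hzk, hbelow, habove⟩ := hp₂ z hz
    rcases hX z hzX with h | h
    · exact Or.inr (Prod.ext h (funext fun i => habove i (by simp [h])))
    · exact absurd (hpeak z hzk hbelow h ▸ hzX) hones

theorem isVisiblePair_last_last (hX : ∀ z ∈ X, z.1 = 0 ∨ z.1 = Fin.last d)
    (hones : (0, fun _ => true) ∉ X) (c c' : Fin d → Bool) :
    IsVisiblePair (BF d) X (Fin.last d, c) (Fin.last d, c') := by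
  rcases eq_or_ne c c' with rfl | hne
  · exact isVisiblePair_of_forall_length_le Walk.nil (fun q => by simp) (by simp)
  obtain ⟨k, hk, hmin⟩ := Function.exists_ne_forall_lt_eq hne
  let w : Fin (d + 1) × (Fin d → Bool) :=
    (⟨k, by omega⟩, fun i => if i < k then c i else true)
  obtain ⟨p₁, hlen₁, hp₁⟩ := exists_walk_up (u := w) (v := (Fin.last d, c))
      (by simp [w]) fun i hi => by
    change (i : ℕ) < k ∨ d ≤ i at hi
    show (if i < k then c i else true) = c i
    rw [if_pos (by rw [Fin.lt_def]; omega)]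
  obtain ⟨p₂, hlen₂, hp₂⟩ := exists_walk_up (u := w) (v := (Fin.last d, c'))
      (by simp [w]) fun i hi => by
    change (i : ℕ) < k ∨ d ≤ i at hi
    show (if i < k then c i else true) = c' i
    rw [if_pos (by rw [Fin.lt_def]; omega), hmin i (by rw [Fin.lt_def]; omega)]
  change p₁.length = d - k at hlen₁
  change p₂.length = d - k at hlen₂
  have hvalley : ∀ z : Fin (d + 1) × (Fin d → Bool), (k : ℕ) ≤ z.1 →
      (∀ i : Fin d, (z.1 : ℕ) ≤ i → z.2 i = w.2 i) → z.1 = 0 →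
      z = (0, fun _ => true) := fun z hzk habove h => by
    simp only [h] at hzk habove
    change (k : ℕ) ≤ 0 at hzk
    exact Prod.ext h <| funext fun i =>
      (habove i (Nat.zero_le _)).trans (if_neg (by rw [Fin.lt_def]; omega))
  refine isVisiblePair_of_forall_length_le (p₁.reverse.append p₂) (fun q => ?_)
    fun z hz hzX => ?_
  · obtain ⟨⟨z, hz, hzk⟩, -⟩ := exists_levels_of_bit_ne q hk
    have := (length_ge_of_mem_support q hz).2
    simp only [Walk.length_append, Walk.length_reverse, Fin.val_last] at this ⊢
    omega
  rw [Walk.mem_support_append_iff, Walk.support_reverse, List.mem_reverse] at hz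
  rcases hz with hz | hz
  · obtain ⟨hzk, -, hbelow, habove⟩ := hp₁ z hz
    rcases hX z hzX with h | h
    · exact absurd (hvalley z hzk habove h ▸ hzX) hones
    · exact Or.inl (Prod.ext h (funext fun i => hbelow i (by simp [h])))
  · obtain ⟨hzk, -, hbelow, habove⟩ := hp₂ z hz
    rcases hX z hzX with h | h
    · exact absurd (hvalley z hzk habove h ▸ hzX) hones
    · exact Or.inr (Prod.ext h (funext fun i => hbelow i (by simp [h])))

end BF

open BF in
/-- In `BF(d)`, the set of all vertices at levels `0` and `d`, minus the two
vertices of the all-ones column at those levels, is a mutual-visibility set of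
size `2^{d+1} - 2`. -/
theorem bf_mutualVisSet (d : ℕ) (hd : 1 ≤ d) :
    MutualVisSet (BF d)
      ({u : Fin (d + 1) × (Fin d → Bool) | u.1 = 0 ∨ u.1 = Fin.last d} \
        {(0, fun _ => true), (Fin.last d, fun _ => true)}) ∧
    ({u : Fin (d + 1) × (Fin d → Bool) | u.1 = 0 ∨ u.1 = Fin.last d} \
        {(0, fun _ => true), (Fin.last d, fun _ => true)}).ncard = 2 ^ (d + 1) - 2 := by
  have hlevels : {u : Fin (d + 1) × (Fin d → Bool) | u.1 = 0 ∨ u.1 = Fin.last d} =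
      ({0, Fin.last d} : Set (Fin (d + 1))) ×ˢ Set.univ := by
    ext u; simp
  have h0 : (0 : Fin (d + 1)) ≠ Fin.last d := Fin.ne_of_val_ne (show 0 ≠ d by omega)
  refine ⟨?_, ?_⟩
  · rintro ⟨a, c⟩ hx ⟨b, c'⟩ hy
    rcases hx.1 with rfl | rfl <;> rcases hy.1 with rfl | rfl
    · exact isVisiblePair_zero_zero (fun z hz => hz.1) (by simp) c c'
    · exact isVisiblePair_zero_last (fun z hz => hz.1) c c'
    · exact (isVisiblePair_zero_last (fun z hz => hz.1) c' c).symm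
    · exact isVisiblePair_last_last (fun z hz => hz.1) (by simp) c c'
  · rw [Set.ncard_sdiff (by simp [hlevels, Set.insert_subset_iff]), hlevels, Set.ncard_prod,
      Set.ncard_pair h0, Set.ncard_pair (by simp [h0]), Set.ncard_univ, Nat.card_eq_fintype_card]
    simp [pow_succ, mul_comm]
end

section
/- The total mutual-visibility number of the d-dimensional butterfly equals μ_t(BF(d)) = 2^d, for all d ≥ 1. -/
open SimpleGraph

/-
At levels `0` and `d` the vertices come in twin pairs: `[0, c]` and `[0, c']` with `c, c'`
differing only in bit `0` have the same neighbours, and likewise at level `d` with bit `d - 1`.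
One vertex from each of the `2^d` twin pairs gives a total mutual-visibility set, since a shortest
path can pass through the twin of each of its inner vertices instead.

Conversely, a vertex `[ℓ, c]` with `0 < ℓ < d` is the only common neighbour of two vertices at
distance two on levels `ℓ - 1` and `ℓ + 1`, so it lies in no total mutual-visibility set; and a twin
pair is the set of common neighbours of two vertices at distance two on the adjacent level, so such
a set contains at most one vertex of each pair.
-/
section

variable {V : Type*} {G : SimpleGraph V} {X : Set V}

theorem TotalMutualVisSet.exists_mem_commonNeighbors_notMem (hX : TotalMutualVisSet G X)
    {x y : V} (h : G.edist x y = 2) : ∃ w ∈ G.commonNeighbors x y, w ∉ X := by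
  obtain ⟨p, -, hlen, hvis⟩ := hX x y
  have hdist : G.dist x y = 2 := by simp [SimpleGraph.dist, h]
  rw [hdist] at hlen
  match p, hlen with
  | .cons hxw (.cons hwy .nil), _ =>
    refine ⟨_, ⟨hxw, hwy.symm⟩, fun hw => ?_⟩
    rcases hvis _ (by simp) hw with rfl | rfl
    exacts [hxw.ne rfl, hwy.ne rfl]

theorem exists_walk_avoiding_of_adj
    (h : ∀ u, ∃ u' ∉ X, G.neighborSet u ⊆ G.neighborSet u') {a u w : V} (ha : G.Adj a u) :
    ∀ p : G.Walk u w, ∃ q : G.Walk a w, q.length = p.length + 1 ∧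
      ∀ z ∈ q.support, z ∈ X → z = a ∨ z = w
  | .nil => ⟨.cons ha .nil, rfl, by simp⟩
  | .cons huv p => by
    obtain ⟨u', hu'X, hu'⟩ := h u
    obtain ⟨q, hq, hqX⟩ := exists_walk_avoiding_of_adj h (hu' huv) p
    refine ⟨.cons (hu' ha.symm).symm q, by simp [hq], fun z hz hzX => ?_⟩
    rcases List.mem_cons.mp (Walk.support_cons _ _ ▸ hz) with rfl | hz
    · exact .inl rfl
    · exact (hqX z hz hzX).imp (fun hzu => absurd (hzu ▸ hzX) hu'X) id

theorem totalMutualVisSet_of_forall_exists_neighborSet_subset (hG : G.Preconnected)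
    (h : ∀ x ∈ X, ∃ x' ∉ X, G.neighborSet x ⊆ G.neighborSet x') : TotalMutualVisSet G X := by
  have h' : ∀ u, ∃ u' ∉ X, G.neighborSet u ⊆ G.neighborSet u' := fun u => by
    by_cases hu : u ∈ X
    exacts [h u hu, ⟨u, hu, subset_rfl⟩]
  intro x y
  obtain ⟨p, hp⟩ := (hG x y).exists_walk_length_eq_dist
  cases p with
  | nil => exact ⟨.nil, .nil, hp, by simp⟩
  | cons ha p =>
    obtain ⟨q, hq, hqX⟩ := exists_walk_avoiding_of_adj h' ha p
    have hq' : q.length = G.dist x y := by rw [hq, ← hp, Walk.length_cons]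
    exact ⟨q, q.isPath_of_length_eq_dist hq', hq', hqX⟩

end

theorem Set.ncard_union_image_eq_two_mul {α : Type*} {s : Set α} {f : α → α}
    (hf : f.Injective) (hs : s.Finite) (h : ∀ x ∈ s, f x ∉ s) :
    (s ∪ f '' s).ncard = 2 * s.ncard := by
  have hdisj : Disjoint s (f '' s) := Set.disjoint_right.mpr <| by
    rintro _ ⟨x, hx, rfl⟩
    exact h x hx
  rw [Set.ncard_union_eq hdisj hs (hs.image f), Set.ncard_image_of_injective s hf, two_mul]

theorem Function.eq_or_eq_update_not_of_forall_ne {ι : Type*} [DecidableEq ι] {f g : ι → Bool}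
    {b : ι} (h : ∀ i ≠ b, f i = g i) : f = g ∨ f = Function.update g b (!g b) := by
  by_cases hb : f b = g b
  · refine .inl (funext fun i => ?_)
    by_cases hi : i = b
    exacts [hi ▸ hb, h i hi]
  · refine .inr (funext fun i => ?_)
    by_cases hi : i = b
    · subst hi
      simpa using Bool.eq_not.mpr hb
    · rw [Function.update_of_ne hi, h i hi]

namespace Butterfly

variable {d : ℕ}

theorem adj_iff {u v : Fin (d + 1) × (Fin d → Bool)} :
    (BF d).Adj u v ↔ ((u.1 : ℕ) + 1 = v.1 ∨ (v.1 : ℕ) + 1 = u.1) ∧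
      ∀ i : Fin d, (i : ℕ) ≠ min (u.1 : ℕ) v.1 → u.2 i = v.2 i := by
  simp only [BF, fromRel_adj, ne_eq]
  constructor
  · rintro ⟨-, ⟨hl, hc⟩ | ⟨hl, hc⟩⟩
    · exact ⟨.inl hl, fun i hi => hc i (by omega)⟩
    · exact ⟨.inr hl, fun i hi => (hc i (by omega)).symm⟩
  · rintro ⟨hl | hl, hc⟩
    · exact ⟨fun h => by simp [h] at hl, .inl ⟨hl, fun i hi => hc i (by omega)⟩⟩
    · exact ⟨fun h => by simp [h] at hl, .inr ⟨hl, fun i hi => (hc i (by omega)).symm⟩⟩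

theorem reachable_zero_piecewise (c c' : Fin d → Bool) :
    ∀ ℓ (hℓ : ℓ ≤ d), (BF d).Reachable (0, c)
      (⟨ℓ, Nat.lt_succ_of_le hℓ⟩, fun i => if (i : ℕ) < ℓ then c' i else c i)
  | 0, _ => by simp only [Nat.not_lt_zero, if_false]; rfl
  | ℓ + 1, hℓ => (reachable_zero_piecewise c c' ℓ (by omega)).trans <| Adj.reachable <|
      adj_iff.mpr ⟨.inl rfl, fun i hi => by dsimp only at hi ⊢; split_ifs <;> first | rfl | omega⟩

theorem preconnected : (BF d).Preconnected := by
  have hcolumn (c : Fin d → Bool) (ℓ : Fin (d + 1)) : (BF d).Reachable (0, c) (ℓ, c) := by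
    simpa using reachable_zero_piecewise c c ℓ (by omega)
  have hbottom (c c' : Fin d → Bool) : (BF d).Reachable (0, c) (0, c') := by
    have hup := reachable_zero_piecewise c c' d le_rfl
    simp only [Fin.is_lt, if_true] at hup
    exact hup.trans (hcolumn c' (Fin.last d)).symm
  intro u v
  exact (hcolumn u.2 u.1).symm.trans ((hbottom u.2 v.2).trans (hcolumn v.2 v.1))

def boundary (d : ℕ) : Set (Fin (d + 1) × (Fin d → Bool)) :=
  ({0, Fin.last d} : Set (Fin (d + 1))) ×ˢ Set.univ

theorem mem_boundary {v : Fin (d + 1) × (Fin d → Bool)} :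
    v ∈ boundary d ↔ (v.1 : ℕ) = 0 ∨ (v.1 : ℕ) = d := by
  simp only [boundary, Set.mem_prod, Set.mem_insert_iff, Set.mem_singleton_iff, Set.mem_univ,
    and_true, Fin.ext_iff, Fin.val_zero, Fin.val_last]

theorem subset_boundary_of_totalMutualVisSet {X : Set (Fin (d + 1) × (Fin d → Bool))}
    (hX : TotalMutualVisSet (BF d) X) : X ⊆ boundary d := by
  rintro ⟨ℓ, c⟩ hv
  by_contra hvb
  rw [mem_boundary, not_or] at hvb
  dsimp only at hvb
  have hℓ : (ℓ : ℕ) < d := by omega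
  let i₁ : Fin d := ⟨ℓ - 1, by omega⟩
  let i₂ : Fin d := ⟨ℓ, hℓ⟩
  let x : Fin (d + 1) × (Fin d → Bool) := (⟨ℓ - 1, by omega⟩, Function.update c i₁ (!c i₁))
  let y : Fin (d + 1) × (Fin d → Bool) := (⟨ℓ + 1, by omega⟩, Function.update c i₂ (!c i₂))
  have hxv : (BF d).Adj x (ℓ, c) := adj_iff.mpr ⟨.inl (by dsimp [x]; omega), fun i hi =>
    Function.update_of_ne (Fin.ne_of_val_ne (by dsimp [x, i₁] at hi ⊢; omega)) _ _⟩
  have hyv : (BF d).Adj y (ℓ, c) := adj_iff.mpr ⟨.inr (by dsimp [y]), fun i hi =>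
    Function.update_of_ne (Fin.ne_of_val_ne (by dsimp [y, i₂] at hi ⊢; omega)) _ _⟩
  have hxy : x ≠ y := fun h => by simpa [x, y] using congrArg (fun v => (v.1 : ℕ)) h
  have hxy' : ¬ (BF d).Adj x y := fun h => by simp [adj_iff, x, y] at h; omega
  obtain ⟨w, hw, hwX⟩ := hX.exists_mem_commonNeighbors_notMem
    (edist_eq_two_iff.mpr ⟨hxy, hxy', (ℓ, c), hxv, hyv⟩)
  rw [mem_commonNeighbors, adj_iff, adj_iff] at hw
  obtain ⟨⟨hlx, hcx⟩, hly, hcy⟩ := hw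
  dsimp only [x, y, Fin.val_mk] at hlx hcx hly hcy
  suffices hwv : w = (ℓ, c) from hwX (hwv ▸ hv)
  refine Prod.ext (Fin.ext (by dsimp only; omega)) (funext fun i => ?_)
  by_cases hi : (i : ℕ) = ℓ - 1
  · rw [← hcy i (by omega), Function.update_of_ne (Fin.ne_of_val_ne (by dsimp [i₂]; omega))]
  · rw [← hcx i (by omega), Function.update_of_ne (Fin.ne_of_val_ne (by dsimp [i₁]; omega))]

variable [NeZero d]

/-- The bit changed by the edges at level `ℓ` when `ℓ` is `0` or `d`: bit `0`, resp. `d - 1`. -/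
def twinBit (ℓ : Fin (d + 1)) : Fin d :=
  ⟨min ℓ (d - 1), by have := NeZero.pos d; omega⟩

def twin (v : Fin (d + 1) × (Fin d → Bool)) : Fin (d + 1) × (Fin d → Bool) :=
  (v.1, Function.update v.2 (twinBit v.1) (!v.2 (twinBit v.1)))

theorem twin_involutive : Function.Involutive (twin (d := d)) := fun v => by
  simp [twin]

theorem twin_mem_boundary {v : Fin (d + 1) × (Fin d → Bool)} :
    twin v ∈ boundary d ↔ v ∈ boundary d :=
  Iff.rfl

theorem adj_twin_of_adj {u v : Fin (d + 1) × (Fin d → Bool)} (hu : u ∈ boundary d)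
    (h : (BF d).Adj u v) : (BF d).Adj (twin u) v := by
  rw [mem_boundary] at hu
  rw [adj_iff] at h ⊢
  refine ⟨h.1, fun i hi => ?_⟩
  dsimp only [twin] at hi ⊢
  have hib : i ≠ twinBit u.1 := Fin.ne_of_val_ne (by dsimp only [twinBit]; omega)
  rw [Function.update_of_ne hib, h.2 i hi]

theorem twin_notMem_of_totalMutualVisSet {X : Set (Fin (d + 1) × (Fin d → Bool))}
    (hX : TotalMutualVisSet (BF d) X) {v : Fin (d + 1) × (Fin d → Bool)} (hvX : v ∈ X)
    (hv : v ∈ boundary d) : twin v ∉ X := by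
  obtain ⟨ℓ, c⟩ := v
  rw [mem_boundary] at hv
  dsimp only at hv
  set b := twinBit ℓ
  have hb : (b : ℕ) = min (ℓ : ℕ) (d - 1) := rfl
  obtain ⟨ℓ', hℓ'⟩ : ∃ ℓ' : Fin (d + 1),
      ((ℓ : ℕ) = 0 ∧ (ℓ' : ℕ) = 1) ∨ ((ℓ : ℕ) = d ∧ (ℓ' : ℕ) + 1 = d) := by
    have := NeZero.pos d
    rcases hv with h | h
    exacts [⟨⟨1, by omega⟩, .inl ⟨h, rfl⟩⟩, ⟨⟨d - 1, by omega⟩, .inr ⟨h, by dsimp only; omega⟩⟩]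
  let x : Fin (d + 1) × (Fin d → Bool) := (ℓ', c)
  let y : Fin (d + 1) × (Fin d → Bool) := (ℓ', Function.update c b (!c b))
  have hvx : (BF d).Adj (ℓ, c) x := adj_iff.mpr ⟨by dsimp only [x]; omega, fun i hi => rfl⟩
  have hvy : (BF d).Adj (ℓ, c) y := adj_iff.mpr ⟨by dsimp only [y]; omega, fun i hi =>
    (Function.update_of_ne (Fin.ne_of_val_ne (by dsimp only [y] at hi; omega)) _ _).symm⟩
  have hxy : x ≠ y := fun h => by simpa [x, y] using congrFun (congrArg Prod.snd h) b
  have hxy' : ¬ (BF d).Adj x y := fun h => by rw [adj_iff] at h; dsimp only [x, y] at h; omega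
  obtain ⟨w, hw, hwX⟩ := hX.exists_mem_commonNeighbors_notMem
    (edist_eq_two_iff.mpr ⟨hxy, hxy', (ℓ, c), hvx.symm, hvy.symm⟩)
  rw [mem_commonNeighbors, adj_iff, adj_iff] at hw
  obtain ⟨⟨hlx, hcx⟩, hly, hcy⟩ := hw
  dsimp only [x, y] at hlx hcx hly hcy
  -- `x` and `y` differ in bit `b`, and both edges to `w` can only change the same bit
  have hwb : (b : ℕ) = min (ℓ' : ℕ) w.1 := by
    by_contra hne
    simpa using (hcx b hne).trans (hcy b hne).symm
  have hwℓ : w.1 = ℓ := Fin.ext (by omega)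
  have hcw : ∀ i ≠ b, w.2 i = c i := fun i hi =>
    (hcx i (hwb ▸ Fin.val_ne_of_ne hi)).symm
  rcases Function.eq_or_eq_update_not_of_forall_ne hcw with h | h
  · exact absurd ((Prod.ext hwℓ h : w = (ℓ, c)) ▸ hvX) hwX
  · exact (Prod.ext hwℓ h : w = twin (ℓ, c)) ▸ hwX

theorem ncard_boundary : (boundary d).ncard = 2 * 2 ^ d := by
  rw [boundary, Set.ncard_prod, Set.ncard_pair Fin.last_pos'.ne,
    Set.ncard_univ, Nat.card_fun]
  simp

variable (d) in
def twinRepresentatives : Set (Fin (d + 1) × (Fin d → Bool)) :=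
  {v ∈ boundary d | v.2 (twinBit v.1) = false}

theorem twin_notMem_twinRepresentatives {v : Fin (d + 1) × (Fin d → Bool)}
    (hv : v ∈ twinRepresentatives d) : twin v ∉ twinRepresentatives d := by
  simp_all [twinRepresentatives, twin]

theorem twinRepresentatives_union_image_twin :
    twinRepresentatives d ∪ twin '' twinRepresentatives d = boundary d := by
  refine Set.Subset.antisymm (Set.union_subset (fun v hv => hv.1) ?_) fun v hv => ?_
  · rintro _ ⟨v, hv, rfl⟩
    exact twin_mem_boundary.mpr hv.1
  · by_cases hb : v.2 (twinBit v.1) = false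
    · exact .inl ⟨hv, hb⟩
    · refine .inr ⟨twin v, ⟨twin_mem_boundary.mpr hv, ?_⟩, twin_involutive v⟩
      simpa [twin] using hb

theorem ncard_twinRepresentatives : (twinRepresentatives d).ncard = 2 ^ d := by
  have h := Set.ncard_union_image_eq_two_mul twin_involutive.injective (Set.toFinite _)
    fun v hv => twin_notMem_twinRepresentatives (d := d) hv
  rw [twinRepresentatives_union_image_twin, ncard_boundary] at h
  omega

theorem totalMutualVisSet_twinRepresentatives :
    TotalMutualVisSet (BF d) (twinRepresentatives d) :=
  totalMutualVisSet_of_forall_exists_neighborSet_subset preconnected fun v hv =>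
    ⟨twin v, twin_notMem_twinRepresentatives hv, fun _ => adj_twin_of_adj hv.1⟩

theorem ncard_le_of_totalMutualVisSet {X : Set (Fin (d + 1) × (Fin d → Bool))}
    (hX : TotalMutualVisSet (BF d) X) : X.ncard ≤ 2 ^ d := by
  have hXb := subset_boundary_of_totalMutualVisSet hX
  have h := Set.ncard_union_image_eq_two_mul twin_involutive.injective (Set.toFinite X)
    fun v hv => twin_notMem_of_totalMutualVisSet hX hv (hXb hv)
  have hsub : X ∪ twin '' X ⊆ boundary d := Set.union_subset hXb <| by
    rintro _ ⟨v, hv, rfl⟩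
    exact twin_mem_boundary.mpr (hXb hv)
  have := Set.ncard_le_ncard hsub
  rw [h, ncard_boundary] at this
  omega

end Butterfly

/-- `μₜ(BF(d)) = 2^d` for all `d ≥ 1`. -/
theorem totalMu_BF (d : ℕ) (hd : 1 ≤ d) :
    totalMutualVisNum (BF d) = 2 ^ d := by
  have : NeZero d := ⟨by omega⟩
  refine IsGreatest.csSup_eq ⟨⟨Butterfly.twinRepresentatives d,
    Butterfly.totalMutualVisSet_twinRepresentatives, Butterfly.ncard_twinRepresentatives⟩, ?_⟩
  rintro _ ⟨X, hX, rfl⟩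
  exact Butterfly.ncard_le_of_totalMutualVisSet hX
end
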